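/- arXiv:2108.10624 — 10 statements merged into one kernel-verified Lean document; each statement's English description precedes it below -/
import Mathlib

section
/- Let q be an odd prime power with q ≡ 2 (mod 3), and let G(T) = 1 + (1/3)·∑_{k=2}^{q-2} (χ₃(k) + χ₃(1-k))·T^{k-1} + (1/3)·T^{q-2} - (2/3)·T^{q-1} ∈ F_q[T], where χ₃ is the quadratic character modulo 3 (χ₃(n) = 1 if n ≡ 1 mod 3, χ₃(n) = -1 if n ≡ 2 mod 3, χ₃(n) = 0 if 3 | n). Then (x² + x + 1)^{q-2} = G(x) for every x ∈ F_q. -/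
/-- The quadratic character modulo 3. -/
def chi3 (n : ℤ) : ℤ := if n % 3 = 1 then 1 else if n % 3 = 2 then -1 else 0

lemma chi3_c1 (t : ℕ) : ((chi3 ((3*t+1 : ℕ) : ℤ) + chi3 (1 - ((3*t+1 : ℕ) : ℤ)) : ℤ) : ℤ) = 1 := by
  unfold chi3; push_cast; split_ifs <;> omega

lemma chi3_c2 (t : ℕ) : ((chi3 ((3*t+2 : ℕ) : ℤ) + chi3 (1 - ((3*t+2 : ℕ) : ℤ)) : ℤ) : ℤ) = -2 := by
  unfold chi3; push_cast; split_ifs <;> omega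

lemma chi3_c3 (t : ℕ) : ((chi3 ((3*t+3 : ℕ) : ℤ) + chi3 (1 - ((3*t+3 : ℕ) : ℤ)) : ℤ) : ℤ) = 1 := by
  unfold chi3; push_cast; split_ifs <;> omega

lemma key_sum (F : Type*) [Field F] (x : F) :
    ∀ t : ℕ, 1 ≤ t →
      (x ^ 2 + x + 1) *
        ∑ k ∈ Finset.Icc 2 (3 * t),
          ((chi3 (k : ℤ) + chi3 (1 - (k : ℤ)) : ℤ) : F) * x ^ (k - 1)
      = x ^ (3 * t) * (x - 1) - x * (x + 2) := by
  intro t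
  induction t with
  | zero => omega
  | succ t ih =>
    intro _
    rcases Nat.eq_zero_or_pos t with rfl | ht
    · have h : Finset.Icc 2 (3 * 1) = {2, 3} := by decide
      rw [h, Finset.sum_pair (by norm_num)]
      norm_num [chi3]
      ring
    · have h1 : 3 * (t + 1) = (3 * t + 2) + 1 := by ring
      have h2 : 3 * t + 2 = (3 * t + 1) + 1 := by ring
      have h3 : 3 * t + 1 = 3 * t + 1 := rfl
      rw [h1, Finset.sum_Icc_succ_top (by omega), h2, Finset.sum_Icc_succ_top (by omega),
        Finset.sum_Icc_succ_top (by omega)]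
      have e1 := chi3_c1 t
      have e2 := chi3_c2 t
      have e3' := chi3_c3 t
      have h4 : 3 * t + 2 + 1 = 3 * t + 3 := by ring
      rw [h4]
      rw [e1, e2, e3']
      have hsum := ih ht
      have hexp1 : 3 * t + 1 - 1 = 3 * t := by omega
      have hexp2 : 3 * t + 1 + 1 - 1 = 3 * t + 1 := by omega
      have hexp3 : 3 * t + 3 - 1 = 3 * t + 2 := by omega
      rw [hexp1, hexp2, hexp3]
      push_cast at hsum ⊢
      linear_combination hsum

theorem stmt3 (F : Type*) [Field F] [Fintype F] (q : ℕ) (hq : Fintype.card F = q)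
    (hodd : Odd q) (h3 : q % 3 = 2)
    (G : F → F)
    (hG : ∀ x : F, G x = 1 + (3 : F)⁻¹ *
        (∑ k ∈ Finset.Icc 2 (q - 2), ((chi3 (k : ℤ) + chi3 (1 - (k : ℤ)) : ℤ) : F) * x ^ (k - 1))
      + (3 : F)⁻¹ * x ^ (q - 2) - (2 / 3 : F) * x ^ (q - 1)) :
    ∀ x : F, (x ^ 2 + x + 1) ^ (q - 2) = G x := by
  have hcard : 2 ≤ q := by rw [← hq]; exact Fintype.one_lt_card
  have hodd' : q % 2 = 1 := Nat.odd_iff.mp hodd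
  have hq5 : 5 ≤ q := by omega
  obtain ⟨t, ht, ht1⟩ : ∃ t, q - 2 = 3 * t ∧ 1 ≤ t := ⟨(q - 2) / 3, by omega, by omega⟩
  have hcast : ((q : ℕ) : F) = 0 := by
    rw [← hq]; exact FiniteField.cast_card_eq_zero F
  have h3ne : (3 : F) ≠ 0 := by
    intro h30
    obtain ⟨m, hm⟩ : ∃ m, q = 3 * m + 2 := ⟨q / 3, by omega⟩
    rw [hm] at hcast
    push_cast at hcast
    rw [h30] at hcast
    simp at hcast
    have h1 : (1 : F) = 0 := by
      have h2 : (3 : F) - 2 = 1 := by norm_num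
      rw [← h2, h30, hcast]; ring
    exact one_ne_zero h1
  intro x
  have hGx := hG x
  have hS := key_sum F x t ht1
  rw [← ht] at hS
  set S := ∑ k ∈ Finset.Icc 2 (q - 2), ((chi3 (k : ℤ) + chi3 (1 - (k : ℤ)) : ℤ) : F) * x ^ (k - 1) with hSdef
  -- x^2 + x + 1 ≠ 0
  have hane : x ^ 2 + x + 1 ≠ 0 := by
    intro ha
    have hx0 : x ≠ 0 := by
      intro h; rw [h] at ha; simp at ha
    have hx3 : x ^ 3 = 1 := by
      have h2 : x ^ 3 - 1 = 0 := by linear_combination (x - 1) * ha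
      linear_combination h2
    have hxq : x ^ (q - 1) = 1 := by
      have h := FiniteField.pow_card_sub_one_eq_one x hx0
      rwa [hq] at h
    have hd3 : orderOf x ∣ 3 := orderOf_dvd_of_pow_eq_one hx3
    have hdq : orderOf x ∣ (q - 1) := orderOf_dvd_of_pow_eq_one hxq
    rcases (Nat.prime_three.eq_one_or_self_of_dvd _ hd3) with h1 | h1
    · have hx1 : x = 1 := orderOf_eq_one_iff.mp h1
      rw [hx1] at ha
      apply h3ne
      linear_combination ha
    · rw [h1] at hdq
      omega
  have key : (x ^ 2 + x + 1) * G x = 1 := by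
    rcases eq_or_ne x 0 with rfl | hx0
    · have hq2 : q - 2 ≠ 0 := by omega
      have hq1 : q - 1 ≠ 0 := by omega
      rw [zero_pow hq2, zero_pow hq1] at hGx
      have hS0 : S = 0 := by
        rw [zero_pow hq2] at hS
        have h2 : ((0:F) ^ 2 + 0 + 1) = 1 := by norm_num
        rw [h2, one_mul] at hS
        rw [hS]; ring
      rw [hGx, hS0]
      ring
    · have hxq : x ^ (q - 1) = 1 := by
        have h := FiniteField.pow_card_sub_one_eq_one x hx0
        rwa [hq] at h
      have hxy : x ^ (q - 2) * x = 1 := by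
        rw [← pow_succ]
        have h : q - 2 + 1 = q - 1 := by omega
        rw [h, hxq]
      rw [hGx, hxq]
      field_simp
      linear_combination hS + (x + 2) * hxy
  have haq : (x ^ 2 + x + 1) ^ (q - 1) = 1 := by
    have h := FiniteField.pow_card_sub_one_eq_one _ hane
    rwa [hq] at h
  have h1 : (x ^ 2 + x + 1) ^ (q - 2) * (x ^ 2 + x + 1) = 1 := by
    rw [← pow_succ]
    have h : q - 2 + 1 = q - 1 := by omega
    rw [h, haq]
  rw [eq_inv_of_mul_eq_one_left h1, eq_inv_of_mul_eq_one_right key]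
end

section
/- Let q be an odd prime power with q ≡ 2 (mod 3). Then (x² + x + 1)^{q-2} ≡ G(x) (mod (T^q - T)·F_q[T]), i.e., (T²+T+1)^{q-2} and G(T) agree as functions on F_q, where G is as in the previous definition. Equivalently, (T²+T+1)²·G(T) ≡ T²+T+1 ≡ (T²+T+1)^q (mod T^q - T). -/
open Polynomial

theorem chi3_add_chi3_one_sub (k : ℤ) :
    chi3 k + chi3 (1 - k) = if k % 3 = 2 then -2 else 1 := by
  unfold chi3
  split_ifs <;> omega

theorem sq_add_add_one_mul_sum_chi3 {R : Type*} [CommRing R] (a : R) (n : ℕ) :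
    (a ^ 2 + a + 1) * ∑ k ∈ Finset.Icc 1 (3 * n),
        ((chi3 (k : ℤ) + chi3 (1 - (k : ℤ)) : ℤ) : R) * a ^ (k - 1) =
      (1 - a) * (1 - a ^ (3 * n)) := by
  induction n with
  | zero => simp
  | succ n ih =>
    rw [show 3 * (n + 1) = 3 * n + 1 + 1 + 1 by ring, Finset.sum_Icc_succ_top (by omega),
      Finset.sum_Icc_succ_top (by omega), Finset.sum_Icc_succ_top (by omega)]
    rw [chi3_add_chi3_one_sub, chi3_add_chi3_one_sub, chi3_add_chi3_one_sub,
      if_neg (by omega), if_pos (by omega), if_neg (by omega)]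
    simp only [Int.cast_one, Int.cast_neg, Int.cast_ofNat, Nat.add_sub_cancel]
    linear_combination ih

noncomputable def cyclotomicThreeInvPoly (F : Type*) [Field F] (q : ℕ) : F[X] :=
  1 + C (3 : F)⁻¹ *
      (∑ k ∈ Finset.Icc 2 (q - 2), C ((chi3 (k : ℤ) + chi3 (1 - (k : ℤ)) : ℤ) : F) * X ^ (k - 1))
    + C (3 : F)⁻¹ * X ^ (q - 2) - C (2 / 3 : F) * X ^ (q - 1)

theorem three_mul_cyclotomicThreeInvPoly {F : Type*} [Field F] (h3 : (3 : F) ≠ 0) {q : ℕ}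
    (hq : 3 ≤ q) :
    3 * cyclotomicThreeInvPoly F q =
      2 + ∑ k ∈ Finset.Icc 1 (q - 2), ((chi3 (k : ℤ) + chi3 (1 - (k : ℤ)) : ℤ) : F[X]) * X ^ (k - 1)
        + X ^ (q - 2) - 2 * X ^ (q - 1) := by
  have hinv : (3 : F[X]) * C 3⁻¹ = 1 := by rw [← map_ofNat C 3, ← C_mul, mul_inv_cancel₀ h3, C_1]
  rw [Finset.Icc_eq_cons_Ioc (by omega), Finset.sum_cons, ← Finset.Icc_add_one_left_eq_Ioc,
    chi3_add_chi3_one_sub, if_neg (by decide), Nat.sub_self, pow_zero, one_add_one_eq_two,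
    cyclotomicThreeInvPoly, div_eq_mul_inv, mul_comm (2 : F), C_mul]
  simp only [mul_add, mul_sub, ← mul_assoc, hinv, one_mul, map_ofNat, map_intCast]
  ring

theorem three_mul_sq_add_add_one_mul_cyclotomicThreeInvPoly_sub_one {F : Type*} [Field F]
    (h3 : (3 : F) ≠ 0) {q : ℕ} (hq : q % 3 = 2) (hq3 : 3 ≤ q) :
    3 * ((X ^ 2 + X + 1) * cyclotomicThreeInvPoly F q - 1) = -((X ^ q - X) * (1 + 2 * X)) := by
  have hG := three_mul_cyclotomicThreeInvPoly h3 hq3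
  obtain ⟨n, rfl⟩ : ∃ n, q = 3 * n + 2 := ⟨q / 3, by omega⟩
  simp only [Nat.add_sub_cancel, show 3 * n + 2 - 1 = 3 * n + 1 by omega] at hG
  linear_combination (X ^ 2 + X + 1) * hG + sq_add_add_one_mul_sum_chi3 (X : F[X]) n

theorem X_pow_sub_X_dvd_sq_add_add_one_mul_cyclotomicThreeInvPoly_sub_one {F : Type*} [Field F]
    (h3 : (3 : F) ≠ 0) {q : ℕ} (hq : q % 3 = 2) (hq3 : 3 ≤ q) :
    X ^ q - X ∣ (X ^ 2 + X + 1) * cyclotomicThreeInvPoly F q - 1 := by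
  have h3unit : IsUnit (3 : F[X]) := by
    rw [← map_ofNat C 3]
    exact isUnit_C.mpr h3.isUnit
  refine h3unit.dvd_mul_left.mp ⟨-(1 + 2 * X), ?_⟩
  rw [three_mul_sq_add_add_one_mul_cyclotomicThreeInvPoly_sub_one h3 hq hq3]
  ring

theorem FiniteField.X_pow_card_sub_X_dvd_of_forall_eval_eq_zero {K : Type*} [Field K]
    [Fintype K] {p : K[X]} (hp : ∀ a, p.eval a = 0) : X ^ Fintype.card K - X ∣ p := by
  rcases eq_or_ne p 0 with rfl | hp0
  · exact dvd_zero _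
  have hsplit : Splits (X ^ Fintype.card K - X : K[X]) := by
    rw [splits_iff_card_roots, FiniteField.roots_X_pow_card_sub_X, ← Finset.card_def,
      Finset.card_univ, FiniteField.X_pow_card_sub_X_natDegree_eq _ Fintype.one_lt_card]
  refine hsplit.dvd_of_roots_le_roots
    (FiniteField.X_pow_card_sub_X_ne_zero _ Fintype.one_lt_card) ?_
  rw [FiniteField.roots_X_pow_card_sub_X, Multiset.le_iff_subset Finset.univ.nodup]
  exact fun a _ => (mem_roots hp0).2 (hp a)

theorem FiniteField.three_ne_zero_of_card_mod_three_eq_two {K : Type*} [Field K] [Fintype K]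
    (h : Fintype.card K % 3 = 2) : (3 : K) ≠ 0 := by
  intro h3
  have hcard : ((3 * (Fintype.card K / 3) + 2 : ℕ) : K) = 0 := by
    rw [show 3 * (Fintype.card K / 3) + 2 = Fintype.card K by omega]
    exact FiniteField.cast_card_eq_zero K
  push_cast at hcard
  exact one_ne_zero (by linear_combination (1 + (Fintype.card K / 3 : ℕ) : K) * h3 - hcard)

theorem FiniteField.sq_add_add_one_ne_zero {K : Type*} [Field K] [Fintype K]
    (h : Fintype.card K % 3 = 2) (a : K) : a ^ 2 + a + 1 ≠ 0 := by
  intro ha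
  have hcube : a ^ 3 = 1 := by linear_combination (a - 1) * ha
  have hsq : a ^ 2 = a := by
    calc a ^ 2 = (a ^ 3) ^ (Fintype.card K / 3) * a ^ 2 := by rw [hcube, one_pow, one_mul]
      _ = a ^ Fintype.card K := by rw [← pow_mul, ← pow_add]; congr 1; omega
      _ = a := FiniteField.pow_card a
  exact three_ne_zero_of_card_mod_three_eq_two h
    (by linear_combination (3 - 2 * a) * ha + (1 + 2 * a) * hsq)

theorem FiniteField.X_pow_card_sub_X_dvd_pow_card_sub_one_sub_one {K : Type*} [Field K]
    [Fintype K] {p : K[X]} (hp : ∀ a, p.eval a ≠ 0) :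
    X ^ Fintype.card K - X ∣ p ^ (Fintype.card K - 1) - 1 :=
  X_pow_card_sub_X_dvd_of_forall_eval_eq_zero fun a => by
    simp [FiniteField.pow_card_sub_one_eq_one _ (hp a)]

theorem dvd_pow_sub_of_dvd_mul_sub_one {R : Type*} [CommRing R] {m u g : R} {n : ℕ}
    (hg : m ∣ u * g - 1) (hu : m ∣ u ^ (n + 1) - 1) : m ∣ u ^ n - g := by
  have hsplit : u ^ n - g = g * (u ^ (n + 1) - 1) - u ^ n * (u * g - 1) := by ring
  rw [hsplit]
  exact dvd_sub (dvd_mul_of_dvd_right hu _) (dvd_mul_of_dvd_right hg _)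

open Polynomial in
theorem stmt4 (F : Type*) [Field F] [Fintype F] (q : ℕ) (hq : Fintype.card F = q)
    (hodd : Odd q) (h3 : q % 3 = 2)
    (G : F[X])
    (hG : G = 1 + C (3 : F)⁻¹ *
        (∑ k ∈ Finset.Icc 2 (q - 2), C ((chi3 (k : ℤ) + chi3 (1 - (k : ℤ)) : ℤ) : F) * X ^ (k - 1))
      + C (3 : F)⁻¹ * X ^ (q - 2) - C (2 / 3 : F) * X ^ (q - 1)) :
    (X ^ q - X : F[X]) ∣ (X ^ 2 + X + 1) ^ (q - 2) - G := by
  subst hq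
  replace hG : G = cyclotomicThreeInvPoly F (Fintype.card F) := hG
  subst hG
  have hq3 : 3 ≤ Fintype.card F := by have := Nat.odd_iff.mp hodd; omega
  have hunit := FiniteField.X_pow_card_sub_X_dvd_pow_card_sub_one_sub_one (p := X ^ 2 + X + 1)
    fun a => by simpa using FiniteField.sq_add_add_one_ne_zero h3 a
  rw [show Fintype.card F - 1 = Fintype.card F - 2 + 1 by omega] at hunit
  exact dvd_pow_sub_of_dvd_mul_sub_one
    (X_pow_sub_X_dvd_sq_add_add_one_mul_cyclotomicThreeInvPoly_sub_one
      (FiniteField.three_ne_zero_of_card_mod_three_eq_two h3) h3 hq3) hunit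
end

section
/- Let R be a commutative ring, n a positive integer, P(T) = p_{n-1}T^{n-1} + ⋯ + p_1T + p_0 ∈ R[T], and X_1,…,X_n, Y_1,…,Y_n ∈ R. Then det[P(X_i·Y_j)]_{1≤i,j≤n} = (∏_{i=0}^{n-1} p_i) · ∏_{1≤i<j≤n} (X_j - X_i)(Y_j - Y_i). -/
theorem stmt5 (R : Type*) [CommRing R] (n : ℕ) (hn : 0 < n)
    (p : Fin n → R) (X Y : Fin n → R) :
    Matrix.det (Matrix.of fun i j : Fin n => ∑ k : Fin n, p k * (X i * Y j) ^ (k : ℕ)) =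
      (∏ k : Fin n, p k) *
        ∏ s ∈ Finset.univ.filter (fun s : Fin n × Fin n => s.1 < s.2),
          (X s.2 - X s.1) * (Y s.2 - Y s.1) := by
  have hM : (Matrix.of fun i j : Fin n => ∑ k : Fin n, p k * (X i * Y j) ^ (k : ℕ)) =
      Matrix.vandermonde X * Matrix.diagonal p * (Matrix.vandermonde Y).transpose := by
    ext i j
    simp [Matrix.mul_apply, Matrix.diagonal_apply, Finset.mul_sum, Finset.sum_mul, Matrix.vandermonde, mul_pow]
    apply Finset.sum_congr rfl
    intro k _
    ring
  have hpair : ∏ s ∈ Finset.univ.filter (fun s : Fin n × Fin n => s.1 < s.2),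
      (X s.2 - X s.1) * (Y s.2 - Y s.1) =
      (∏ i : Fin n, ∏ j ∈ Finset.Ioi i, (X j - X i)) *
      (∏ i : Fin n, ∏ j ∈ Finset.Ioi i, (Y j - Y i)) := by
    rw [← Finset.prod_mul_distrib]
    simp_rw [← Finset.prod_mul_distrib]
    rw [Finset.prod_filter, ← Finset.univ_product_univ, Finset.prod_product]
    congr 1; ext i
    rw [← Finset.prod_filter]
    congr 1
    ext j
    simp
  rw [hM, Matrix.det_mul, Matrix.det_mul, Matrix.det_transpose, Matrix.det_vandermonde,
    Matrix.det_vandermonde, Matrix.det_diagonal, hpair]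
  ring
end

section
/- Let m be a positive integer and a an integer coprime to m, and let π_a(m) be the permutation of Z/mZ given by x ↦ ax. If m is odd, the sign of π_a(m) equals the Jacobi symbol (a/m). -/
/-!
Multiplication by `a` is a permutation of any finite abelian group `A` of odd order prime to `a`,
and its sign is multiplicative along subgroups: in the coordinates `A ≃ (A ⧸ K) × K` given by a
choice of coset representatives, a map compatible with `K` acts on each fibre as an affine map of
`K`, and translations of a group of odd order are even. Taking `K` of prime order `p` reduces the
statement to `ZMod p`, where `x ↦ a * x` fixes `0` and acts on `(ZMod p)ˣ` by right
multiplication. Right multiplication by `u` moves every coset of `⟨u⟩` along a cycle of length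
`orderOf u`, so its sign is `-1` exactly when `u ^ ((p - 1) / 2) ≠ 1`, which by Euler's criterion
is the Legendre symbol.
-/

open Equiv Equiv.Perm

@[to_additive sign_eq_pow_mul_prod_of_apply_out_add]
theorem sign_eq_pow_mul_prod_of_apply_out_mul {G : Type*} [Group G] [Fintype G] [DecidableEq G]
    (H : Subgroup G) [Fintype H] [Fintype (G ⧸ H)] [DecidableEq (G ⧸ H)]
    (σ : Perm G) (σQ : Perm (G ⧸ H)) (τ : G ⧸ H → Perm H)
    (hσ : ∀ q (h : H), σ (q.out * h) = (σQ q).out * τ q h) :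
    sign σ = sign σQ ^ Nat.card H * ∏ q, sign (τ q) := by
  let e : G ≃ (G ⧸ H) × H :=
    { toFun x := ((x : G ⧸ H), ⟨(x : G ⧸ H).out⁻¹ * x,
        QuotientGroup.eq.mp (QuotientGroup.out_eq' _)⟩)
      invFun y := y.1.out * y.2
      left_inv x := by simp
      right_inv := fun ⟨q, h⟩ => by
        have hq : ((q.out * h : G) : G ⧸ H) = q := by
          rw [QuotientGroup.mk_mul_of_mem _ h.2, QuotientGroup.out_eq']
        ext <;> simp [hq] }
  have he : ∀ y, e.symm y = y.1.out * y.2 := fun _ => rfl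
  rw [sign_eq_sign_of_equiv σ (prodCongrLeft (fun _ => σQ) * prodCongrRight τ) e, map_mul,
    sign_prodCongrLeft, sign_prodCongrRight, Finset.prod_const, Finset.card_univ,
    Nat.card_eq_fintype_card]
  intro x
  obtain ⟨⟨q, h⟩, rfl⟩ := e.symm.surjective x
  rw [e.apply_symm_apply, he, hσ, ← he (σQ q, τ q h), e.apply_symm_apply]
  rfl

theorem sign_mulRight_zpowers {G : Type*} [Group G] [Fintype G] [DecidableEq G] (g : G) :
    sign (Equiv.mulRight (⟨g, Subgroup.mem_zpowers g⟩ : Subgroup.zpowers g)) =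
      (-1) ^ (orderOf g - 1) := by
  have hg : IsOfFinOrder g := isOfFinOrder_of_finite g
  rw [← sign_finRotate]
  refine (sign_eq_sign_of_equiv _ _ (finEquivZPowers hg) fun i => ?_).symm
  have := i.neZero
  ext
  simp only [finRotate_apply, finEquivZPowers_apply, coe_mulRight, Subgroup.coe_mul,
    Fin.val_add, Fin.val_one', Nat.add_mod_mod, pow_mod_orderOf, pow_succ]

theorem sign_mulRight {G : Type*} [Group G] [Fintype G] [DecidableEq G] (g : G) :
    sign (Equiv.mulRight g) = ((-1) ^ (orderOf g - 1)) ^ (Nat.card G / orderOf g) := by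
  classical
  let H := Subgroup.zpowers g
  have hcard : Nat.card (G ⧸ H) = Nat.card G / orderOf g := by
    rw [H.card_eq_card_quotient_mul_card_subgroup, Nat.card_zpowers,
      Nat.mul_div_cancel _ (orderOf_pos g)]
  rw [sign_eq_pow_mul_prod_of_apply_out_mul H _ 1
      (fun _ => Equiv.mulRight ⟨g, Subgroup.mem_zpowers g⟩) fun q h => mul_assoc _ _ _,
    map_one, one_pow, one_mul, Finset.prod_const, Finset.card_univ, ← Nat.card_eq_fintype_card,
    hcard, sign_mulRight_zpowers]

theorem sign_mulRight_of_odd_card {G : Type*} [Group G] [Fintype G] [DecidableEq G]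
    (hG : Odd (Nat.card G)) (g : G) : sign (Equiv.mulRight g) = 1 := by
  have hodd : Odd (orderOf g) := hG.of_dvd_nat (orderOf_dvd_natCard g)
  rw [sign_mulRight, (Nat.Odd.sub_odd hodd odd_one).neg_one_pow, one_pow]

theorem sign_addRight_of_odd_card {A : Type*} [AddGroup A] [Fintype A] [DecidableEq A]
    (hA : Odd (Nat.card A)) (c : A) : sign (Equiv.addRight c) = 1 :=
  (sign_eq_sign_of_equiv _ (Equiv.mulRight (Multiplicative.ofAdd c)) Multiplicative.ofAdd
    fun _ => rfl).trans (sign_mulRight_of_odd_card (G := Multiplicative A) hA _)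

theorem sign_mulRight_eq_one_iff {G : Type*} [Group G] [Fintype G] [DecidableEq G]
    (hG : Even (Nat.card G)) (g : G) :
    sign (Equiv.mulRight g) = 1 ↔ g ^ (Nat.card G / 2) = 1 := by
  obtain ⟨k, hk⟩ := orderOf_dvd_natCard g
  have hd := orderOf_pos g
  have hk2 : Even ((orderOf g - 1) * k) ↔ Even k := by
    rw [hk, Nat.even_mul] at hG
    rw [Nat.even_mul, Nat.even_sub hd]
    simp only [Nat.not_even_one, iff_false]
    tauto
  rw [sign_mulRight, ← pow_mul, neg_one_pow_eq_one_iff_even (by decide), hk,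
    Nat.mul_div_cancel_left _ hd, hk2, ← orderOf_dvd_iff_pow_eq_one,
    Nat.dvd_div_iff_mul_dvd (hk ▸ even_iff_two_dvd.mp hG), mul_comm, Nat.mul_dvd_mul_iff_left hd,
    even_iff_two_dvd]

theorem sign_eq_sign_quotient_pow_mul_sign_addSubgroup_pow {A : Type*} [AddCommGroup A]
    [Fintype A] [DecidableEq A] (K : AddSubgroup A) [Fintype K] [Fintype (A ⧸ K)]
    [DecidableEq (A ⧸ K)] (hK : Odd (Nat.card K)) (σ : Perm A)
    (hσ : ∀ x y, σ (x + y) = σ x + σ y) (σK : Perm K) (hσK : ∀ k, (σK k : A) = σ k)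
    (σQ : Perm (A ⧸ K)) (hσQ : ∀ x : A, σQ x = σ x) :
    sign σ = sign σQ ^ Nat.card K * sign σK ^ Nat.card (A ⧸ K) := by
  have hc (q : A ⧸ K) : σ q.out - (σQ q).out ∈ K := by
    rw [← QuotientAddGroup.eq_iff_sub_mem, ← hσQ, QuotientAddGroup.out_eq',
      QuotientAddGroup.out_eq']
  rw [sign_eq_pow_mul_prod_of_apply_out_add K σ σQ
    (fun q => Equiv.addRight ⟨_, hc q⟩ * σK) fun q k => ?_]
  · simp only [map_mul, sign_addRight_of_odd_card hK, one_mul, Finset.prod_const,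
      Finset.card_univ, Nat.card_eq_fintype_card]
  · rw [hσ, Perm.mul_apply, coe_addRight, AddSubgroup.coe_add, hσK, add_left_comm,
      add_sub_cancel, add_comm]

theorem sign_mul_left_eq_sign_mulRight {G₀ : Type*} [CommGroupWithZero G₀] [Fintype G₀]
    [DecidableEq G₀] (u : G₀ˣ) (π : Perm G₀) (hπ : ∀ x, π x = u * x) :
    sign π = sign (Equiv.mulRight u) := by
  have hne : ∀ x, π x ≠ 0 ↔ x ≠ 0 := fun x => by simp [hπ]
  rw [← ofSubtype_subtypePerm (f := π) (p := (· ≠ 0)) hne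
    fun x hx h0 => hx (by simp [h0, hπ]), sign_ofSubtype]
  exact (sign_eq_sign_of_equiv _ _ unitsEquivNeZero fun v =>
    Subtype.ext (by simp [hπ, mul_comm])).symm

theorem sign_mul_left_eq_legendreSym (p : ℕ) [Fact p.Prime] (hp : p ≠ 2) (a : ℤ)
    (ha : (a : ZMod p) ≠ 0) (π : Perm (ZMod p)) (hπ : ∀ x, π x = a * x) :
    (sign π : ℤ) = legendreSym p a := by
  have hcard : Nat.card (ZMod p)ˣ = p - 1 := by rw [Nat.card_eq_fintype_card, ZMod.card_units]
  have hodd : Odd p := (Fact.out : p.Prime).odd_of_ne_two hp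
  have key : sign π = 1 ↔ legendreSym p a = 1 := by
    rw [sign_mul_left_eq_sign_mulRight (Units.mk0 _ ha) π hπ,
      sign_mulRight_eq_one_iff (hcard ▸ Nat.Odd.sub_odd hodd odd_one), hcard,
      legendreSym.eq_one_iff p ha,
      ZMod.euler_criterion p ha, ← Units.val_inj, Units.val_pow_eq_pow_val, Units.val_mk0,
      Units.val_one, show (p - 1) / 2 = p / 2 by have := Nat.odd_iff.mp hodd; omega]
  rcases Int.units_eq_one_or (sign π) with h | h <;>
    rcases legendreSym.eq_one_or_neg_one p ha with h' | h' <;> simp_all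

theorem Int.units_pow_of_odd (u : ℤˣ) {n : ℕ} (hn : Odd n) : u ^ n = u := by
  rw [Int.units_pow_eq_pow_mod_two, Nat.odd_iff.mp hn, pow_one]

theorem sign_zsmul_eq_legendreSym_of_card_eq_prime {A : Type*} [AddCommGroup A] [Fintype A]
    [DecidableEq A] {p : ℕ} [Fact p.Prime] (hp : p ≠ 2) (hA : Nat.card A = p) (a : ℤ)
    (ha : (a : ZMod p) ≠ 0) (π : Perm A) (hπ : ∀ x, π x = a • x) :
    (sign π : ℤ) = legendreSym p a := by
  let e : A ≃+ ZMod p := addEquivOfPrimeCardEq hA (Nat.card_zmod p)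
  rw [← sign_permCongr e.toEquiv π]
  refine sign_mul_left_eq_legendreSym p hp a ha _ fun x => ?_
  simp [permCongr_apply, hπ, map_zsmul]

theorem exists_perm_apply_eq_zsmul (A : Type*) [AddCommGroup A] [Finite A] {a : ℤ}
    (ha : IsCoprime a (Nat.card A)) : ∃ π : Perm A, ∀ x, π x = a • x := by
  obtain ⟨u, v, huv⟩ := ha
  have hinv (x : A) : u • a • x = x := by
    have hcard : (Nat.card A : ℤ) • x = 0 := by rw [natCast_zsmul, card_nsmul_eq_zero']
    calc u • a • x = (u * a + v * Nat.card A) • x := by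
          rw [add_zsmul, mul_zsmul x v, hcard, zsmul_zero, add_zero, mul_zsmul]
      _ = x := by rw [huv, one_zsmul]
  have hinj : Function.Injective fun x : A => a • x := fun x y h => by
    rw [← hinv x, ← hinv y]
    exact congrArg (u • ·) h
  exact ⟨Equiv.ofBijective _ (Finite.injective_iff_bijective.mp hinj), fun _ => rfl⟩

theorem sign_zsmul_eq_sign_quotient_mul_sign_addSubgroup {A : Type*} [AddCommGroup A] [Fintype A]
    [DecidableEq A] (hA : Odd (Nat.card A)) (K : AddSubgroup A) [Fintype K] [Fintype (A ⧸ K)]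
    [DecidableEq (A ⧸ K)] (a : ℤ) (π : Perm A) (hπ : ∀ x, π x = a • x) (πK : Perm K)
    (hπK : ∀ k, πK k = a • k) (πQ : Perm (A ⧸ K)) (hπQ : ∀ q, πQ q = a • q) :
    sign π = sign πQ * sign πK := by
  rw [K.card_eq_card_quotient_mul_card_addSubgroup, Nat.odd_mul] at hA
  rw [sign_eq_sign_quotient_pow_mul_sign_addSubgroup_pow K hA.2 π
      (fun x y => by simp only [hπ, zsmul_add]) πK
      (fun k => by rw [hπK, hπ, AddSubgroup.coe_zsmul])
      πQ (fun x => by rw [hπQ, hπ, QuotientAddGroup.mk_zsmul]),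
    Int.units_pow_of_odd _ hA.1, Int.units_pow_of_odd _ hA.2]

theorem sign_eq_jacobiSym_of_apply_eq_zsmul {A : Type*} [AddCommGroup A] [Fintype A]
    [DecidableEq A] (hA : Odd (Nat.card A)) (a : ℤ) (ha : IsCoprime a (Nat.card A))
    (π : Perm A) (hπ : ∀ x, π x = a • x) :
    (sign π : ℤ) = jacobiSym a (Nat.card A) := by
  classical
  induction hn : Nat.card A using Nat.strong_induction_on generalizing A with | _ n ih
  subst hn
  obtain h1 | h1 := eq_or_ne (Nat.card A) 1
  · have : Subsingleton A := (Nat.card_eq_one_iff_unique.mp h1).1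
    rw [Subsingleton.elim π 1, h1, map_one, jacobiSym.one_right, Units.val_one]
  obtain ⟨p, hp, hpA⟩ := Nat.exists_prime_and_dvd h1
  have : Fact p.Prime := ⟨hp⟩
  obtain ⟨g, hg⟩ := exists_prime_addOrderOf_dvd_card' p hpA
  let K := AddSubgroup.zmultiples g
  have hK : Nat.card K = p := (Nat.card_zmultiples g).trans hg
  have hcard : Nat.card A = Nat.card (A ⧸ K) * p :=
    hK ▸ K.card_eq_card_quotient_mul_card_addSubgroup
  obtain ⟨hQ, hpodd⟩ := Nat.odd_mul.mp (hcard ▸ hA)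
  have hp2 : p ≠ 2 := by rintro rfl; norm_num at hpodd
  have hlt : Nat.card (A ⧸ K) < Nat.card A := hcard ▸ lt_mul_of_one_lt_right hQ.pos hp.one_lt
  have hdvd (d : ℕ) (hd : d ∣ Nat.card A) : IsCoprime a d :=
    ha.of_isCoprime_of_dvd_right (Int.natCast_dvd_natCast.mpr hd)
  have haQ := hdvd _ (hcard ▸ dvd_mul_right _ _)
  have ha' : (a : ZMod p) ≠ 0 :=
    ((ZMod.coe_int_isUnit_iff_isCoprime a p).mpr (hdvd p hpA).symm).ne_zero
  obtain ⟨πQ, hπQ⟩ := exists_perm_apply_eq_zsmul (A ⧸ K) haQ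
  obtain ⟨πK, hπK⟩ := exists_perm_apply_eq_zsmul K (hdvd _ (hK ▸ hpA))
  rw [sign_zsmul_eq_sign_quotient_mul_sign_addSubgroup hA K a π hπ πK hπK πQ hπQ,
    Units.val_mul, ih _ hlt hQ haQ πQ hπQ rfl,
    sign_zsmul_eq_legendreSym_of_card_eq_prime hp2 hK a ha' πK hπK,
    hcard, jacobiSym.mul_right' a hQ.pos.ne' hp.ne_zero, jacobiSym.legendreSym.to_jacobiSym]

theorem stmt6 (m : ℕ) [NeZero m] (hm : Odd m) (a : ℤ) (ha : IsCoprime a (m : ℤ))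
    (π : Equiv.Perm (ZMod m)) (hπ : ∀ x : ZMod m, π x = (a : ZMod m) * x) :
    (Equiv.Perm.sign π : ℤ) = jacobiSym a m := by
  have h := sign_eq_jacobiSym_of_apply_eq_zsmul (A := ZMod m) (by rwa [Nat.card_zmod]) a
    (by rwa [Nat.card_zmod]) π fun x => by rw [hπ, zsmul_eq_mul]
  rwa [Nat.card_zmod] at h
end

section
/- Let m be a positive integer with m ≡ 2 (mod 4) and a an integer coprime to m. Then the permutation x ↦ ax of Z/mZ is even, i.e., its sign is 1. -/
theorem stmt7 (m : ℕ) [NeZero m] (hm : m % 4 = 2) (a : ℤ) (ha : IsCoprime a (m : ℤ))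
    (π : Equiv.Perm (ZMod m)) (hπ : ∀ x : ZMod m, π x = (a : ZMod m) * x) :
    Equiv.Perm.sign π = 1 := by
  obtain ⟨k, hk, hk2⟩ : ∃ k, m = 2 * k ∧ k % 2 = 1 := ⟨m / 2, by omega, by omega⟩
  subst hk
  haveI : NeZero k := ⟨by omega⟩
  have hco : Nat.Coprime 2 k := Nat.coprime_two_left.mpr (Nat.odd_iff.mpr hk2)
  set e := ZMod.chineseRemainder hco with he
  have h0k : (((2 * k : ℕ) : ℤ) : ZMod k) = 0 := by
    push_cast
    rw [ZMod.natCast_self, mul_zero]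
  have hu : IsUnit ((a : ZMod k)) := by
    have h := ha.map (Int.castRingHom (ZMod k))
    rw [show ((Int.castRingHom (ZMod k)) ((2*k : ℕ) : ℤ)) = 0 from h0k] at h
    exact isCoprime_zero_right.mp h
  have h02 : (((2 * k : ℕ) : ℤ) : ZMod 2) = 0 := by
    push_cast
    rw [show ((2:ZMod 2)) = 0 from rfl, zero_mul]
  have hu2 : IsUnit ((a : ZMod 2)) := by
    have h := ha.map (Int.castRingHom (ZMod 2))
    rw [show ((Int.castRingHom (ZMod 2)) ((2*k : ℕ) : ℤ)) = 0 from h02] at h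
    exact isCoprime_zero_right.mp h
  have ha2 : ((a : ZMod 2)) = 1 := by
    have : ∀ x : ZMod 2, IsUnit x → x = 1 := by decide
    exact this _ hu2
  set g : Equiv.Perm (ZMod k) := Units.mulLeft hu.unit with hg
  have key : Equiv.permCongr e.toEquiv π = Equiv.prodCongrRight (fun _ => g) := by
    refine Equiv.ext fun p => ?_
    have h1 : (Equiv.permCongr e.toEquiv π) p = e (π (e.symm p)) := rfl
    rw [h1, hπ, map_mul, map_intCast, RingEquiv.apply_symm_apply]
    have h2 : ((a : ZMod 2 × ZMod k)) = ((a : ZMod 2), (a : ZMod k)) := rfl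
    rw [h2]
    rw [ha2]
    exact Prod.ext (one_mul _) rfl
  have hsgn : Equiv.Perm.sign π = Equiv.Perm.sign (Equiv.permCongr e.toEquiv π) :=
    (Equiv.Perm.sign_permCongr e.toEquiv π).symm
  rw [hsgn, key, Equiv.Perm.sign_prodCongrRight]
  simp only [Finset.prod_const, Finset.card_univ]
  rw [show Fintype.card (ZMod 2) = 2 by simp]
  exact Int.units_sq _
end

section
/- Let m be a positive integer with 4 | m and a an odd integer coprime to m. Then the sign of the permutation x ↦ ax of Z/mZ equals (-1)^{(a-1)/2}. -/
/-!
Write `m = 2n`. Since `a = 2k + 1` is odd, multiplication by `a` maps the even residues `2y` to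
`2(ay)` and the odd residues `2y + 1` to `2(ay + k) + 1`. Identifying both classes with `ℤ/nℤ`,
the permutation becomes `σ ⊕ (x ↦ x + k) ∘ σ` with `σ` multiplication by `a` on `ℤ/nℤ`, so its
sign is that of the translation by `k` on `ℤ/nℤ`, an `n`-cycle to the power `k`. For `n` even
this is `(-1)^k`.
-/

open Equiv Equiv.Perm

namespace ZMod

theorem sign_addRight_one (n : ℕ) [NeZero n] :
    sign (Equiv.addRight (1 : ZMod n)) = (-1) ^ (n - 1) := by
  obtain ⟨n, rfl⟩ := Nat.exists_eq_succ_of_ne_zero (NeZero.ne n)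
  rw [← sign_finRotate]
  exact sign_eq_sign_of_equiv _ _ (Equiv.refl _) fun x => (finRotate_apply (x : Fin (n + 1))).symm

theorem sign_addRight_intCast {n : ℕ} [NeZero n] (hn : Even n) (k : ℤ) :
    sign (Equiv.addRight (k : ZMod n)) = (-1) ^ k := by
  have hn1 : Odd (n - 1) := by
    obtain ⟨j, hj⟩ := hn
    exact ⟨j - 1, by have := NeZero.ne n; omega⟩
  rw [← zsmul_one, ← zsmul_addRight, map_zpow, sign_addRight_one, hn1.neg_one_pow]

def doubleHom (n : ℕ) : ZMod n →+ ZMod (2 * n) :=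
  ZMod.lift n ⟨(AddMonoidHom.mulLeft 2).comp (Int.castAddHom _), by
    simp only [AddMonoidHom.comp_apply, AddMonoidHom.coe_mulLeft, Int.coe_castAddHom,
      Int.cast_natCast]
    exact_mod_cast ZMod.natCast_self (2 * n)⟩

variable {n : ℕ}

theorem doubleHom_intCast (z : ℤ) : doubleHom n z = 2 * z :=
  ZMod.lift_coe _ _ z

theorem doubleHom_intCast_mul (c : ℤ) (y : ZMod n) :
    doubleHom n (c * y) = c * doubleHom n y := by
  rw [← zsmul_eq_mul, ← zsmul_eq_mul, map_zsmul]

theorem doubleHom_injective : Function.Injective (doubleHom n) := by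
  refine (injective_iff_map_eq_zero _).2 fun y hy => ?_
  obtain ⟨z, rfl⟩ := ZMod.intCast_surjective y
  rw [doubleHom_intCast, ← Int.cast_two, ← Int.cast_mul, ZMod.intCast_zmod_eq_zero_iff_dvd,
    Nat.cast_mul, Nat.cast_two, mul_dvd_mul_iff_left two_ne_zero] at hy
  exact (ZMod.intCast_zmod_eq_zero_iff_dvd z n).2 hy

theorem doubleHom_ne_add_one (y y' : ZMod n) : doubleHom n y ≠ doubleHom n y' + 1 := by
  obtain ⟨z, rfl⟩ := ZMod.intCast_surjective y
  obtain ⟨z', rfl⟩ := ZMod.intCast_surjective y'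
  intro h
  rw [doubleHom_intCast, doubleHom_intCast] at h
  have h2 : ((2 * n : ℕ) : ℤ) ∣ 2 * z' + 1 - 2 * z := by
    rw [← ZMod.intCast_eq_intCast_iff_dvd_sub]
    push_cast
    exact h
  push_cast at h2
  have : (2 : ℤ) ∣ 2 * z' + 1 - 2 * z := (dvd_mul_right 2 (n : ℤ)).trans h2
  omega

noncomputable def evenOddEquiv (n : ℕ) [NeZero n] : ZMod n ⊕ ZMod n ≃ ZMod (2 * n) :=
  Equiv.ofBijective (Sum.elim (doubleHom n) (doubleHom n · + 1)) <| by
    refine (Fintype.bijective_iff_injective_and_card _).2 ⟨?_, by simp [ZMod.card, two_mul]⟩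
    exact doubleHom_injective.sumElim ((add_left_injective 1).comp doubleHom_injective)
      doubleHom_ne_add_one

theorem sign_eq_mul_of_evenOdd [NeZero n] (π : Perm (ZMod (2 * n))) (σ τ : Perm (ZMod n))
    (hσ : ∀ y, π (doubleHom n y) = doubleHom n (σ y))
    (hτ : ∀ y, π (doubleHom n y + 1) = doubleHom n (τ y) + 1) :
    sign π = sign σ * sign τ := by
  rw [← sign_sumCongr]
  refine (sign_eq_sign_of_equiv (σ.sumCongr τ) π (evenOddEquiv n) ?_).symm
  rintro (y | y) <;> simp [evenOddEquiv, hσ, hτ]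

theorem sign_mul_left_two_mul_add_one [NeZero n] (k : ℤ) (hk : IsCoprime (2 * k + 1) (n : ℤ))
    (π : Perm (ZMod (2 * n))) (hπ : ∀ x, π x = ((2 * k + 1 : ℤ) : ZMod (2 * n)) * x) :
    sign π = sign (Equiv.addRight (k : ZMod n)) := by
  set σ : Perm (ZMod n) := Units.mulLeft (ZMod.unitOfIsCoprime _ hk)
  have hσ : ∀ y, σ y = ((2 * k + 1 : ℤ) : ZMod n) * y := fun _ => rfl
  rw [sign_eq_mul_of_evenOdd π σ (Equiv.addRight (k : ZMod n) * σ), map_mul, mul_left_comm,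
    Int.units_mul_self, mul_one]
  · intro y
    rw [hπ, hσ, doubleHom_intCast_mul]
  · intro y
    rw [hπ, Perm.mul_apply, hσ, Equiv.coe_addRight, map_add, doubleHom_intCast_mul,
      doubleHom_intCast]
    push_cast
    ring

end ZMod

theorem stmt8 (m : ℕ) [NeZero m] (hm : 4 ∣ m) (a : ℤ) (haodd : Odd a)
    (ha : IsCoprime a (m : ℤ))
    (π : Equiv.Perm (ZMod m)) (hπ : ∀ x : ZMod m, π x = (a : ZMod m) * x) :
    Equiv.Perm.sign π = (-1 : ℤˣ) ^ ((a - 1) / 2) := by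
  obtain ⟨n, rfl⟩ : 2 ∣ m := (dvd_mul_right 2 2).trans hm
  have hn : Even n := even_iff_two_dvd.2 (by omega)
  have : NeZero n := ⟨right_ne_zero_of_mul (NeZero.ne (2 * n))⟩
  obtain ⟨k, rfl⟩ := haodd
  have hk : IsCoprime (2 * k + 1) (n : ℤ) :=
    ha.of_isCoprime_of_dvd_right (by push_cast; exact dvd_mul_left _ _)
  rw [ZMod.sign_mul_left_two_mul_add_one k hk π hπ, ZMod.sign_addRight_intCast hn]
  congr 1
  omega
end

section
/- Let q be an odd prime power and let a_1, …, a_{q-1} be an enumeration of all elements of F_q^×. Then ∏_{1≤i<j≤q-1} (a_j - a_i)² = (-1)^{(q+1)/2}. -/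
open Finset

theorem stmt11 (F : Type*) [Field F] [Fintype F] (q : ℕ)
    (hq : Fintype.card F = q) (hodd : Odd q) (a : Fin (q - 1) ≃ Fˣ) :
    (∏ s ∈ Finset.univ.filter (fun s : Fin (q - 1) × Fin (q - 1) => s.1 < s.2),
        ((a s.2 : F) - (a s.1 : F)) ^ 2) = (-1 : F) ^ ((q + 1) / 2) := by
  classical
  obtain ⟨m, hm⟩ := hodd
  have hq2 : 2 ≤ q := hq ▸ Fintype.one_lt_card
  have hm1 : 1 ≤ m := by omega
  -- Wilson's theorem
  have hwilson : (∏ x : Fˣ, (x : F)) = -1 := by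
    have h2 : ((∏ x : Fˣ, x : Fˣ) : F) = ((-1 : Fˣ) : F) := by
      rw [FiniteField.prod_univ_units_id_eq_neg_one]
    simpa using h2
  -- key: for each unit x, ∏_{y ≠ x} (y - x) = x⁻¹
  have key : ∀ x : Fˣ, (∏ y ∈ (univ : Finset Fˣ).erase x, ((y : F) - (x : F)))
      = ((x : F))⁻¹ := by
    intro x
    have hx0 : (x : F) ≠ 0 := Units.ne_zero x
    have step1 : (∏ y ∈ (univ : Finset Fˣ).erase x, ((y : F) - (x : F)))
        = ∏ z ∈ (univ : Finset Fˣ).erase (-x), (z : F) := by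
      refine Finset.prod_bij' (fun y hy => Units.mk0 ((y : F) - (x : F))
          (sub_ne_zero.mpr fun h => (Finset.mem_erase.mp hy).1 (Units.ext h)))
        (fun z hz => Units.mk0 ((z : F) + (x : F))
          (fun h => (Finset.mem_erase.mp hz).1 (Units.ext (by
            rw [Units.val_neg]; exact eq_neg_of_add_eq_zero_left h))))
        ?_ ?_ ?_ ?_ ?_
      · intro y hy
        simp only [Finset.mem_erase, Finset.mem_univ, and_true]
        intro h
        apply (y : Fˣ).ne_zero
        have h2 := congrArg Units.val h
        simp only [Units.val_mk0, Units.val_neg] at h2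
        linear_combination h2
      · intro z hz
        simp only [Finset.mem_erase, Finset.mem_univ, and_true]
        intro h
        apply (z : Fˣ).ne_zero
        have h2 := congrArg Units.val h
        simp only [Units.val_mk0] at h2
        linear_combination h2
      · intro y hy; apply Units.ext; simp
      · intro z hz; apply Units.ext; simp
      · intro y hy; simp
    rw [step1]
    have h3 := Finset.mul_prod_erase (univ : Finset Fˣ) (fun z : Fˣ => (z : F))
      (Finset.mem_univ (-x))
    rw [hwilson] at h3
    have hx' : ((-x : Fˣ) : F) = -(x : F) := by simp
    rw [hx'] at h3
    have hxP : (x : F) * (∏ z ∈ (univ : Finset Fˣ).erase (-x), (z : F)) = 1 := by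
      linear_combination -h3
    exact (inv_eq_of_mul_eq_one_right hxP).symm
  -- product of x⁻¹ over all units
  have hinv : (∏ x : Fˣ, ((x : F))⁻¹) = -1 := by
    rw [Finset.prod_inv_distrib, hwilson]
    norm_num
  -- reindex the off-diagonal product from Fin (q-1) to Fˣ
  have hoff : (∏ p ∈ (univ : Finset (Fin (q - 1) × Fin (q - 1))).filter
        (fun p => p.1 ≠ p.2), ((a p.2 : F) - (a p.1 : F)))
      = ∏ p ∈ (univ : Finset (Fˣ × Fˣ)).filter (fun p => p.1 ≠ p.2),
        ((p.2 : F) - (p.1 : F)) := by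
    refine Finset.prod_nbij' (fun p => (a p.1, a p.2))
      (fun p => (a.symm p.1, a.symm p.2)) ?_ ?_ ?_ ?_ ?_
    · intro p hp
      simp only [Finset.mem_filter, Finset.mem_univ, true_and] at hp ⊢
      exact fun h => hp (a.injective h)
    · intro p hp
      simp only [Finset.mem_filter, Finset.mem_univ, true_and] at hp ⊢
      exact fun h => hp (a.symm.injective h)
    · intro p hp; simp
    · intro p hp; simp
    · intro p hp; simp
  -- group the Fˣ off-diagonal product
  have hgroup : (∏ p ∈ (univ : Finset (Fˣ × Fˣ)).filter (fun p => p.1 ≠ p.2),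
        ((p.2 : F) - (p.1 : F)))
      = ∏ x : Fˣ, ∏ y ∈ (univ : Finset Fˣ).erase x, ((y : F) - (x : F)) := by
    rw [Finset.prod_filter, ← Finset.univ_product_univ, Finset.prod_product]
    refine Finset.prod_congr rfl fun x _ => ?_
    rw [← Finset.prod_filter]
    apply Finset.prod_congr
    · ext y; simp [ne_comm]
    · intros; rfl
  have hneq : (∏ p ∈ (univ : Finset (Fin (q - 1) × Fin (q - 1))).filter
        (fun p => p.1 ≠ p.2), ((a p.2 : F) - (a p.1 : F))) = -1 := by
    rw [hoff, hgroup]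
    rw [Finset.prod_congr rfl fun x _ => key x]
    exact hinv
  -- split the off-diagonal into < and >
  set S := (univ : Finset (Fin (q - 1) × Fin (q - 1))).filter (fun p => p.1 < p.2)
    with hS
  set T := (univ : Finset (Fin (q - 1) × Fin (q - 1))).filter (fun p => p.2 < p.1)
    with hT
  have hunion : (univ : Finset (Fin (q - 1) × Fin (q - 1))).filter
      (fun p => p.1 ≠ p.2) = S ∪ T := by
    ext p
    simp only [hS, hT, Finset.mem_filter, Finset.mem_union, Finset.mem_univ, true_and]
    constructor
    · exact fun h => (lt_or_gt_of_ne h).imp id id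
    · rintro (h | h) <;> [exact ne_of_lt h; exact (ne_of_lt h).symm]
  have hdisj : Disjoint S T := by
    rw [Finset.disjoint_left]
    intro p hp hp'
    simp only [hS, hT, Finset.mem_filter] at hp hp'
    exact absurd hp'.2 (not_lt.mpr (le_of_lt hp.2))
  have hmap : T = S.image Prod.swap := by
    ext p
    simp only [hS, hT, Finset.mem_image, Finset.mem_filter, Finset.mem_univ, true_and]
    constructor
    · intro h
      exact ⟨p.swap, by simpa using h, p.swap_swap⟩
    · rintro ⟨r, hr, rfl⟩
      simpa using hr
  have hTS : (∏ p ∈ T, ((a p.2 : F) - (a p.1 : F)))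
      = ∏ p ∈ S, ((a p.1 : F) - (a p.2 : F)) := by
    rw [hmap, Finset.prod_image (fun x _ y _ h => Prod.swap_injective h)]
    exact Finset.prod_congr rfl fun p _ => rfl
  have hcardST : T.card = S.card := by
    rw [hmap, Finset.card_image_of_injective _ Prod.swap_injective]
  -- the main factorization
  have hmain : ((-1 : F)) ^ S.card *
      (∏ p ∈ S, ((a p.2 : F) - (a p.1 : F)) ^ 2) = -1 := by
    have h4 : ((-1 : F)) ^ S.card * (∏ p ∈ S, ((a p.2 : F) - (a p.1 : F)) ^ 2)
        = ∏ p ∈ S, (-1 * ((a p.2 : F) - (a p.1 : F)) ^ 2) := by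
      rw [Finset.prod_mul_distrib, Finset.prod_const]
    have h5 : (∏ p ∈ S, (-1 * ((a p.2 : F) - (a p.1 : F)) ^ 2))
        = (∏ p ∈ S, ((a p.2 : F) - (a p.1 : F)))
          * ∏ p ∈ S, ((a p.1 : F) - (a p.2 : F)) := by
      rw [← Finset.prod_mul_distrib]
      exact Finset.prod_congr rfl fun p _ => by ring
    rw [h4, h5, ← hTS, ← Finset.prod_union hdisj, ← hunion, hneq]
  -- compute the cardinality of S
  have hcardneq : ((univ : Finset (Fin (q - 1) × Fin (q - 1))).filter
      (fun p => p.1 ≠ p.2)).card = (q - 1) * (q - 1) - (q - 1) := by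
    have h6 : (univ : Finset (Fin (q - 1) × Fin (q - 1))).filter (fun p => p.1 ≠ p.2)
        = (univ : Finset (Fin (q - 1))).offDiag := by
      ext p; simp [Finset.mem_offDiag]
    rw [h6, Finset.offDiag_card]
    simp
  have hcardS : 2 * S.card = (q - 1) * (q - 1) - (q - 1) := by
    rw [← hcardneq, hunion, Finset.card_union_of_disjoint hdisj, hcardST]
    ring
  have hq1 : q - 1 = 2 * m := by omega
  have hcardS' : 2 * S.card = 2 * m * (2 * m) - 2 * m := by rw [← hq1]; exact hcardS
  have hmk : m ≤ m * m := Nat.le_mul_of_pos_left m hm1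
  have h7 : 2 * m * (2 * m) = 2 * (2 * (m * m)) := by ring
  rw [h7] at hcardS'
  have hScard : S.card = 2 * (m * m) - m := by
    generalize m * m = k at hcardS' hmk ⊢
    omega
  -- parity of m * m
  have hmm : m % 2 = (m * m) % 2 := by
    have h8 := Nat.mul_mod m m 2
    rcases Nat.mod_two_eq_zero_or_one m with h | h <;> simp [h] at h8 <;> omega
  -- finish with parity
  have hP : (∏ p ∈ S, ((a p.2 : F) - (a p.1 : F)) ^ 2)
      = (-1 : F) ^ (S.card + 1) := by
    have h1 : ((-1 : F)) ^ S.card * ((-1 : F)) ^ S.card = 1 := by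
      rw [← pow_add, ← two_mul, pow_mul]
      norm_num
    calc (∏ p ∈ S, ((a p.2 : F) - (a p.1 : F)) ^ 2)
        = ((-1 : F)) ^ S.card * ((-1 : F)) ^ S.card *
            (∏ p ∈ S, ((a p.2 : F) - (a p.1 : F)) ^ 2) := by rw [h1, one_mul]
      _ = ((-1 : F)) ^ S.card * (((-1 : F)) ^ S.card *
            (∏ p ∈ S, ((a p.2 : F) - (a p.1 : F)) ^ 2)) := by ring
      _ = ((-1 : F)) ^ S.card * (-1) := by rw [hmain]
      _ = (-1 : F) ^ (S.card + 1) := by rw [pow_succ]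
  rw [hP, neg_one_pow_eq_pow_mod_two, neg_one_pow_eq_pow_mod_two (n := (q + 1) / 2)]
  congr 1
  have hq12 : (q + 1) / 2 = m + 1 := by omega
  rw [hScard, hq12]
  generalize m * m = k at hmm hmk
  omega
end

section
/- Let q be an odd prime power and a_1, …, a_{q-1} an enumeration of F_q^×. Then ∏_{1≤i<j≤q-1} (a_j - a_i)(a_j^{-1} - a_i^{-1}) = 1 in F_q. -/
/-!
Since `(a_j - a_i)(a_j⁻¹ - a_i⁻¹) = (1 - a_i/a_j)(1 - a_j/a_i)`, the product equals
`∏_j ∏_{i ≠ j} (1 - a_i/a_j)`. For fixed `j` the quotient `a_i/a_j` runs over `Fˣ ∖ {1}`, and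
`∏_{u ≠ 1} (1 - u) = ∏_{u ≠ 1} u = -1`: the first equality because `u ↦ 1 - u` permutes
`Fˣ ∖ {1}`, the second by Wilson's theorem for `Fˣ`. The product is therefore `(-1)^(q-1) = 1`.
-/

open Finset

theorem Finset.prod_filter_lt_mul_swap {ι M : Type*} [LinearOrder ι] [Fintype ι] [CommMonoid M]
    (f : ι → ι → M) :
    ∏ s ∈ univ.filter (fun s : ι × ι => s.1 < s.2), f s.1 s.2 * f s.2 s.1 =
      ∏ j, ∏ i ∈ univ.erase j, f i j := by
  have hswap : ∏ s ∈ univ.filter (fun s : ι × ι => s.1 < s.2), f s.2 s.1 =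
      ∏ s ∈ univ.filter (fun s : ι × ι => s.2 < s.1), f s.1 s.2 :=
    prod_nbij' Prod.swap Prod.swap (by simp) (by simp) (by simp) (by simp) (by simp)
  have hdisj : Disjoint (univ.filter (fun s : ι × ι => s.1 < s.2))
      (univ.filter (fun s : ι × ι => s.2 < s.1)) :=
    disjoint_filter.2 fun s _ h => h.asymm
  rw [prod_mul_distrib, hswap, ← prod_union hdisj, ← filter_or]
  simp_rw [← ne_iff_lt_or_gt, prod_filter, Fintype.prod_prod_type_right, ← prod_filter,
    filter_ne']

theorem sub_mul_inv_sub_inv {F : Type*} [Field F] {x y : F} (hx : x ≠ 0) (hy : y ≠ 0) :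
    (y - x) * (y⁻¹ - x⁻¹) = (1 - x / y) * (1 - y / x) := by
  field_simp

theorem FiniteField.prod_one_sub_units_erase_one (F : Type*) [Field F] [Fintype F]
    [DecidableEq F] : ∏ u ∈ (univ : Finset Fˣ).erase 1, (1 - (u : F)) = -1 := by
  have hne : ∀ u ∈ (univ : Finset Fˣ).erase 1, (1 - (u : F)) ≠ 0 := fun u hu =>
    sub_ne_zero.2 fun h => (ne_of_mem_erase hu) (Units.ext h.symm)
  have hperm : ∏ u ∈ (univ : Finset Fˣ).erase 1, (1 - (u : F)) =
      ∏ u ∈ (univ : Finset Fˣ).erase 1, (u : F) :=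
    prod_bij' (fun u hu => Units.mk0 _ (hne u hu)) (fun u hu => Units.mk0 _ (hne u hu))
      (fun u _ => by simp [Units.ext_iff]) (fun u _ => by simp [Units.ext_iff])
      (fun u _ => by simp) (fun u _ => by simp)
      (fun u _ => rfl)
  rw [hperm, prod_erase _ Units.val_one, ← Units.coe_prod,
    FiniteField.prod_univ_units_id_eq_neg_one, Units.val_neg, Units.val_one]

theorem FiniteField.prod_erase_one_sub_div {F ι : Type*} [Field F] [Fintype F] [Fintype ι]
    [DecidableEq ι] (e : ι ≃ Fˣ) (j : ι) :
    ∏ i ∈ univ.erase j, (1 - (e i : F) / e j) = -1 := by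
  classical
  let e' : ι ≃ Fˣ := e.trans (Equiv.mulRight (e j)⁻¹)
  have he'j : e' j = 1 := mul_inv_cancel (e j)
  rw [← FiniteField.prod_one_sub_units_erase_one F]
  refine prod_equiv e' (fun i => ?_) (fun i _ => ?_)
  · simp [← he'j, e'.injective.ne_iff]
  · simp [e', div_eq_mul_inv]

theorem stmt12_general (F : Type*) [Field F] [Fintype F] (q : ℕ)
    (hodd : Odd q) (a : Fin (q - 1) ≃ Fˣ) :
    (∏ s ∈ Finset.univ.filter (fun s : Fin (q - 1) × Fin (q - 1) => s.1 < s.2),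
        (((a s.2 : F) - (a s.1 : F)) * ((a s.2 : F)⁻¹ - (a s.1 : F)⁻¹))) = 1 := by
  have hfactor (i j : Fin (q - 1)) := sub_mul_inv_sub_inv (a i).ne_zero (a j).ne_zero
  rw [prod_congr rfl fun s _ => hfactor s.1 s.2,
    prod_filter_lt_mul_swap fun i j => 1 - (a i : F) / a j]
  simp_rw [FiniteField.prod_erase_one_sub_div, prod_const, card_univ, Fintype.card_fin]
  exact (Nat.Odd.sub_odd hodd odd_one).neg_one_pow

theorem stmt12 (F : Type*) [Field F] [Fintype F] (q : ℕ)
    (hq : Fintype.card F = q) (hodd : Odd q) (a : Fin (q - 1) ≃ Fˣ) :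
    (∏ s ∈ Finset.univ.filter (fun s : Fin (q - 1) × Fin (q - 1) => s.1 < s.2),
        (((a s.2 : F) - (a s.1 : F)) * ((a s.2 : F)⁻¹ - (a s.1 : F)⁻¹))) = 1 :=
  stmt12_general F q hodd a
end

section
/- Let q be an odd prime power with q ≡ 2 (mod 3), let a_1, …, a_{q-1} be an enumeration of F_q^×, and let T_q = [1/(a_i² - a_i a_j + a_j²)]_{1≤i,j≤q-1} be the (q-1)×(q-1) matrix over F_q. Then det T_q = (-1)^{(q+1)/2} · 2^{(q-2)/3}, an element of the prime subfield F_p ⊆ F_q, where p is the characteristic of F_q. -/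
/-!
Let `s k = ∑_{z ∈ F^×} z^k / (z² - z + 1)`. Substituting `a_j = a_i z` shows that `T_q` times the
Vandermonde matrix `[a_j^k]` equals `diag(a_i⁻²) · [a_j^k] · diag(s k)`, so
`det T_q = (∏ a_i)⁻² ∏_{k < q-1} s k = ∏_{k < q-1} s k` by Wilson's theorem for `F^×`.
Since `z³ + 1 = (z + 1)(z² - z + 1)`, the orthogonality relations for `∑ z^k` give
`s (k + 3) = - s k` away from multiples of `q - 1`. As `q - 1 = 3(2m + 1) + 1`, the relation
`s (q - 1) = s 0` forces `s 1 = - s 0`; the symmetry `z ↦ z⁻¹` gives `s 2 = s 0`, and then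
`s 2 - s 1 + s 0 = q - 1 = -1` yields `s 0 = -1/3`, which determines every factor.
-/

open Finset Matrix

lemma Matrix.det_eq_of_mul_eq_diagonal_mul_mul_diagonal {n R : Type*} [Fintype n]
    [DecidableEq n] [CommRing R] [IsDomain R] {M V : Matrix n n R} {d e : n → R}
    (hV : V.det ≠ 0) (h : M * V = diagonal d * V * diagonal e) :
    M.det = (∏ i, d i) * ∏ i, e i := by
  refine mul_right_cancel₀ hV ?_
  rw [← det_mul, h, det_mul, det_mul, det_diagonal, det_diagonal]
  ring

section Antiperiodic

variable {R : Type*} [CommRing R] {s : ℕ → R} {L : ℕ}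

lemma apply_add_three_mul_of_antiperiodic (hs : ∀ i, i + 3 < L → s (i + 3) = -s i)
    {k j : ℕ} (hkj : k + 3 * j < L) : s (k + 3 * j) = (-1) ^ j * s k := by
  induction j with
  | zero => simp
  | succ j ih =>
    rw [show k + 3 * (j + 1) = k + 3 * j + 3 by ring, hs _ (by omega), ih (by omega)]
    ring

lemma prod_range_three_mul_of_antiperiodic (hs : ∀ i, i + 3 < L → s (i + 3) = -s i)
    {N : ℕ} (hN : 3 * N ≤ L) :
    ∏ i ∈ range (3 * N), s i = (-1) ^ N.choose 2 * (s 0 * s 1 * s 2) ^ N := by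
  induction N with
  | zero => simp
  | succ N ih =>
    have hshift (i : ℕ) (hi : i < 3) : s (3 * N + i) = (-1) ^ N * s i := by
      rw [add_comm, apply_add_three_mul_of_antiperiodic hs (by omega)]
    have hsign : ((-1 : R) ^ N) ^ 2 = 1 := by rw [← pow_mul, pow_mul', neg_one_sq, one_pow]
    rw [show 3 * (N + 1) = 3 * N + 3 by ring, prod_range_add, ih (by omega), prod_range_succ,
      prod_range_succ, prod_range_one, hshift 0 (by norm_num), hshift 1 (by norm_num),
      hshift 2 (by norm_num), Nat.choose_succ_succ', Nat.choose_one_right]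
    linear_combination (-1) ^ N.choose 2 * (s 0 * s 1 * s 2) ^ (N + 1) * (-1) ^ N * hsign

end Antiperiodic

namespace FiniteField

variable {F : Type*} [Field F] [Fintype F]

lemma three_ne_zero_of_card_mod_three (hF : Fintype.card F % 3 = 2) : (3 : F) ≠ 0 := by
  intro h3
  have hcard : (Fintype.card F : F) = 2 := by
    rw [← Nat.div_add_mod (Fintype.card F) 3, hF]
    push_cast
    rw [h3]
    ring
  have h2 : (2 : F) = 0 := hcard ▸ cast_card_eq_zero F
  exact one_ne_zero (by linear_combination h3 - h2 : (1 : F) = 0)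

lemma sq_sub_self_add_one_ne_zero (hF : Fintype.card F % 3 = 2) (z : F) :
    z ^ 2 - z + 1 ≠ 0 := by
  intro hz
  have hcube : z ^ 3 = -1 := by linear_combination (z + 1) * hz
  have hz0 : z ≠ 0 := by rintro rfl; norm_num at hcube
  obtain ⟨t, ht⟩ : ∃ t, Fintype.card F - 1 = 3 * t + 1 := ⟨Fintype.card F / 3, by omega⟩
  have hpow := pow_card_sub_one_eq_one z hz0
  rw [ht, pow_succ, pow_mul, hcube] at hpow
  have hsign : ((-1 : F) ^ t) ^ 2 = 1 := by rw [← pow_mul, pow_mul', neg_one_sq, one_pow]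
  have hsq : z ^ 2 = 1 := by
    rw [show z = (-1) ^ t by linear_combination (-1) ^ t * hpow - z * hsign, hsign]
  have hneg : z = -1 := by linear_combination hcube - z * hsq
  exact three_ne_zero_of_card_mod_three hF (by linear_combination hz - (z - 2) * hneg)

variable [DecidableEq F]

lemma prod_univ_units_sq_eq_one : ∏ u : Fˣ, (u : F) ^ 2 = 1 := by
  rw [prod_pow, ← Units.coe_prod, prod_univ_units_id_eq_neg_one, Units.val_neg, Units.val_one,
    neg_one_sq]

variable (F) in
/-- `z² - z + 1` is the sixth cyclotomic polynomial. -/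
noncomputable def cyclotomicSixMoment (k : ℕ) : F :=
  ∑ z : Fˣ, (z : F) ^ k / ((z : F) ^ 2 - z + 1)

lemma cyclotomicSixMoment_add_two (hF : ∀ z : F, z ^ 2 - z + 1 ≠ 0) (k : ℕ) :
    cyclotomicSixMoment F (k + 2) - cyclotomicSixMoment F (k + 1) + cyclotomicSixMoment F k =
      ∑ z : Fˣ, (z : F) ^ k := by
  simp only [cyclotomicSixMoment, ← sum_sub_distrib, ← sum_add_distrib]
  refine sum_congr rfl fun z _ => ?_
  rw [← sub_div, ← add_div, div_eq_iff (hF z)]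
  ring

lemma cyclotomicSixMoment_zero_eq_two : cyclotomicSixMoment F 0 = cyclotomicSixMoment F 2 := by
  rw [cyclotomicSixMoment, ← Equiv.sum_comp (Equiv.inv Fˣ)]
  refine sum_congr rfl fun z _ => ?_
  have hz : (z : F) ≠ 0 := z.ne_zero
  rw [Equiv.inv_apply, Units.val_inv_eq_inv_val, pow_zero,
    show (z : F)⁻¹ ^ 2 - (z : F)⁻¹ + 1 = ((z : F) ^ 2 - z + 1) / (z : F) ^ 2 by field_simp; ring,
    one_div_div]

lemma cyclotomicSixMoment_card_sub_one :
    cyclotomicSixMoment F (Fintype.card F - 1) = cyclotomicSixMoment F 0 :=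
  sum_congr rfl fun z _ => by rw [pow_card_sub_one_eq_one _ z.ne_zero, pow_zero]

lemma sum_units_inv_mul_pow (u : Fˣ) (k : ℕ) :
    ∑ v : Fˣ, ((u : F) ^ 2 - u * v + (v : F) ^ 2)⁻¹ * (v : F) ^ k =
      ((u : F) ^ 2)⁻¹ * (u : F) ^ k * cyclotomicSixMoment F k := by
  rw [← Equiv.sum_comp (Equiv.mulLeft u), cyclotomicSixMoment, mul_sum]
  refine sum_congr rfl fun z _ => ?_
  rw [Equiv.coe_mulLeft, Units.val_mul,
    show (u : F) ^ 2 - u * (u * z) + (u * z) ^ 2 = (u : F) ^ 2 * ((z : F) ^ 2 - z + 1) by ring,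
    mul_inv, mul_pow, div_eq_mul_inv]
  ring

lemma det_inv_sq_sub_mul_add_sq {n : ℕ} (a : Fin n ≃ Fˣ) :
    (of fun i j : Fin n => ((a i : F) ^ 2 - (a i : F) * (a j : F) + (a j : F) ^ 2)⁻¹).det =
      ∏ k ∈ range n, cyclotomicSixMoment F k := by
  have hV : (vandermonde fun i => (a i : F)).det ≠ 0 :=
    det_vandermonde_ne_zero_iff.mpr fun i j h => a.injective (Units.ext h)
  have hmul : (of fun i j : Fin n => ((a i : F) ^ 2 - (a i : F) * (a j : F) + (a j : F) ^ 2)⁻¹) *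
      vandermonde (fun i => (a i : F)) =
        diagonal (fun i => ((a i : F) ^ 2)⁻¹) * vandermonde (fun i => (a i : F)) *
          diagonal (fun k : Fin n => cyclotomicSixMoment F k) := by
    ext i k
    rw [mul_diagonal, diagonal_mul, mul_apply]
    simp only [of_apply, vandermonde_apply]
    rw [Equiv.sum_comp a
      fun v : Fˣ => ((a i : F) ^ 2 - a i * v + (v : F) ^ 2)⁻¹ * (v : F) ^ (k : ℕ),
      sum_units_inv_mul_pow]
  rw [det_eq_of_mul_eq_diagonal_mul_mul_diagonal hV hmul, prod_inv_distrib,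
    Equiv.prod_comp a fun u : Fˣ => (u : F) ^ 2, prod_univ_units_sq_eq_one, inv_one, one_mul,
    Fin.prod_univ_eq_prod_range]

lemma cyclotomicSixMoment_add_two_eq_ite (hF : Fintype.card F % 3 = 2) (k : ℕ) :
    cyclotomicSixMoment F (k + 2) - cyclotomicSixMoment F (k + 1) + cyclotomicSixMoment F k =
      if Fintype.card F - 1 ∣ k then -1 else 0 := by
  rw [cyclotomicSixMoment_add_two (sq_sub_self_add_one_ne_zero hF), sum_pow_units]

lemma cyclotomicSixMoment_antiperiodic (hF : Fintype.card F % 3 = 2) {i : ℕ}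
    (hi : i + 2 < Fintype.card F - 1) :
    cyclotomicSixMoment F (i + 3 + 1) = -cyclotomicSixMoment F (i + 1) := by
  have h1 := cyclotomicSixMoment_add_two_eq_ite hF (i + 1)
  have h2 := cyclotomicSixMoment_add_two_eq_ite hF (i + 2)
  rw [if_neg (Nat.not_dvd_of_pos_of_lt (by omega) (by omega))] at h1 h2
  linear_combination h1 + h2

lemma cyclotomicSixMoment_one_eq_neg {m : ℕ} (hF : Fintype.card F = 6 * m + 5) :
    cyclotomicSixMoment F 1 = -cyclotomicSixMoment F 0 := by
  have hanti : ∀ i, i + 3 < 3 * (2 * m + 1) + 1 →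
      cyclotomicSixMoment F (i + 3 + 1) = -cyclotomicSixMoment F (i + 1) := fun i hi =>
    cyclotomicSixMoment_antiperiodic (by omega) (by omega)
  have h := apply_add_three_mul_of_antiperiodic (s := fun i => cyclotomicSixMoment F (i + 1))
    hanti (k := 0) (j := 2 * m + 1) (by omega)
  have hcard := cyclotomicSixMoment_card_sub_one (F := F)
  rw [hF, show 6 * m + 5 - 1 = 0 + 3 * (2 * m + 1) + 1 by omega] at hcard
  rw [← hcard, h, zero_add, Odd.neg_one_pow ⟨m, rfl⟩, neg_one_mul, neg_neg]

lemma three_mul_cyclotomicSixMoment_zero {m : ℕ} (hF : Fintype.card F = 6 * m + 5) :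
    3 * cyclotomicSixMoment F 0 = -1 := by
  have h := cyclotomicSixMoment_add_two_eq_ite (F := F) (by omega) 0
  rw [if_pos (dvd_zero _)] at h
  linear_combination h + cyclotomicSixMoment_zero_eq_two (F := F) +
    cyclotomicSixMoment_one_eq_neg hF

lemma prod_range_cyclotomicSixMoment {m : ℕ} (hF : Fintype.card F = 6 * m + 5) :
    ∏ k ∈ range (6 * m + 4), cyclotomicSixMoment F k = (-1) ^ (3 * m + 3) * 2 ^ (2 * m + 1) := by
  set s := cyclotomicSixMoment F
  have hs1 : s 1 = -s 0 := cyclotomicSixMoment_one_eq_neg hF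
  have hs2 : s 2 = s 0 := cyclotomicSixMoment_zero_eq_two.symm
  have hs3 : s 3 = 2 * s 0 := by
    have h := cyclotomicSixMoment_add_two_eq_ite (F := F) (by omega) 1
    rw [if_neg (Nat.not_dvd_of_pos_of_lt one_pos (by omega))] at h
    linear_combination h + hs2 - hs1
  have hpow : s 0 ^ (6 * m + 4) = 1 := by
    have hthree := three_mul_cyclotomicSixMoment_zero hF
    rw [show 6 * m + 4 = Fintype.card F - 1 by omega]
    exact pow_card_sub_one_eq_one _ (right_ne_zero_of_mul (hthree ▸ neg_ne_zero.mpr one_ne_zero))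
  have hblock : (s 1 * s 2 * s 3) ^ (2 * m + 1) * s 0 = -2 ^ (2 * m + 1) := by
    rw [hs1, hs2, hs3, show -s 0 * s 0 * (2 * s 0) = -(2 * s 0 ^ 3) by ring, Odd.neg_pow ⟨m, rfl⟩,
      ← one_mul (2 ^ (2 * m + 1) : F), ← hpow]
    ring
  have hchoose : (2 * m + 1).choose 2 = 2 * (m * m) + m := by
    rw [Nat.choose_two_right, Nat.add_sub_cancel,
      show (2 * m + 1) * (2 * m) = 2 * (2 * (m * m) + m) by ring]
    omega
  have hsign : (-1 : F) ^ (3 * m + 3) = -(-1) ^ (2 * m + 1).choose 2 := by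
    rw [show -(-1 : F) ^ (2 * m + 1).choose 2 = (-1) ^ ((2 * m + 1).choose 2 + 1) by ring,
      neg_one_pow_eq_pow_mod_two, neg_one_pow_eq_pow_mod_two ((2 * m + 1).choose 2 + 1), hchoose]
    congr 1
    omega
  have hanti : ∀ i, i + 3 < 3 * (2 * m + 1) + 1 → s (i + 3 + 1) = -s (i + 1) := fun i hi =>
    cyclotomicSixMoment_antiperiodic (by omega) (by omega)
  rw [show 6 * m + 4 = 3 * (2 * m + 1) + 1 by ring, prod_range_succ',
    prod_range_three_mul_of_antiperiodic (s := fun i => s (i + 1)) hanti (by omega)]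
  simp only [Nat.reduceAdd]
  rw [mul_assoc, hblock, hsign]
  ring

end FiniteField

theorem stmt15 (F : Type*) [Field F] [Fintype F] (q : ℕ)
    (hq : Fintype.card F = q) (hodd : Odd q) (h3 : q % 3 = 2)
    (a : Fin (q - 1) ≃ Fˣ) :
    Matrix.det (Matrix.of fun i j : Fin (q - 1) =>
        ((a i : F) ^ 2 - (a i : F) * (a j : F) + (a j : F) ^ 2)⁻¹) =
      (-1 : F) ^ ((q + 1) / 2) * 2 ^ ((q - 2) / 3) := by
  classical
  obtain ⟨m, rfl⟩ : ∃ m, q = 6 * m + 5 := ⟨q / 6, by obtain ⟨k, rfl⟩ := hodd; omega⟩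
  rw [FiniteField.det_inv_sq_sub_mul_add_sq a, show 6 * m + 5 - 1 = 6 * m + 4 by omega,
    FiniteField.prod_range_cyclotomicSixMoment hq, show (6 * m + 5 + 1) / 2 = 3 * m + 3 by omega,
    show (6 * m + 5 - 2) / 3 = 2 * m + 1 by omega]
end

section
/- Let p ≡ 2 (mod 3) be an odd prime and define the rational number D_p = det[1/(i² - ij + j²)]_{1≤i,j≤p-1} (determinant of the rational matrix). Then 2·D_p, viewed as a p-adic integer/rational with denominator coprime to p, is a quadratic residue modulo p. -/
/-!
Reduce modulo `p`. Since `p ≡ 2 (mod 3)`, cubing permutes `𝔽_pˣ`, with inverse `x ↦ x ^ m`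
where `3m = 2p - 1`. The substitution `x ↦ x ^ m`, `y ↦ -y ^ m` turns `[1 / (x² - xy + y²)]`
into `B = [1 / (a² + ab + b²)]` with `a = x ^ m`, `b = y ^ m`, at the cost of the sign
`(-1) ^ ((p - 1) / 2)` of `y ↦ -y`. As `(a - b)(a² + ab + b²) = x - y`, the matrix `B` is a
diagonal matrix plus the rank-`m` matrix of geometric sums `(x ^ m - y ^ m) / (x - y)`, and the
matrix determinant lemma together with the orthogonality of power sums over `𝔽_pˣ` gives
`det B = (-1/2) ^ m`. Hence `2 D_p ≡ -(-1) ^ ((p - 1) / 2) · (1/2) ^ (m - 1)`, a nonzero square.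
-/

open Matrix Finset

namespace Rat

section DivisionRing

variable (α : Type*) [DivisionRing α]

def denNeZeroSubring : Subring ℚ where
  carrier := {q | (q.den : α) ≠ 0}
  mul_mem' {q r} hq hr := ne_zero_of_dvd_ne_zero (by push_cast; exact mul_ne_zero hq hr)
    (Nat.cast_dvd_cast (mul_den_dvd q r))
  one_mem' := by simp
  add_mem' {q r} hq hr := ne_zero_of_dvd_ne_zero (by push_cast; exact mul_ne_zero hq hr)
    (Nat.cast_dvd_cast (add_den_dvd q r))
  zero_mem' := by simp
  neg_mem' {q} hq := by simpa [den_neg_eq_den] using hq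

def castHomOfDenNeZero : denNeZeroSubring α →+* α where
  toFun q := ((q : ℚ) : α)
  map_one' := by simp
  map_mul' q r := cast_mul_of_ne_zero q.2 r.2
  map_zero' := by simp
  map_add' q r := cast_add_of_ne_zero q.2 r.2

variable {α}

theorem den_inv_intCast_ne_zero {z : ℤ} (hz : (z : α) ≠ 0) :
    ((z : ℚ)⁻¹.den : α) ≠ 0 := by
  have hd : ((z : ℚ)⁻¹.den : ℤ) ∣ z := by
    simpa [divInt_eq_div] using den_dvd 1 z
  exact_mod_cast ne_zero_of_dvd_ne_zero hz (Int.cast_dvd_cast _ _ hd)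

theorem cast_inv_intCast_of_ne_zero {z : ℤ} (hz : (z : α) ≠ 0) :
    (((z : ℚ)⁻¹ : ℚ) : α) = (z : α)⁻¹ := by
  rw [cast_inv_of_ne_zero (by simpa using hz), cast_intCast]

end DivisionRing

variable {α : Type*} [Field α] {n : Type*} [Fintype n] [DecidableEq n] {A : Matrix n n ℚ}

theorem det_eq_coe_det_of_den_ne_zero (hA : ∀ i j, ((A i j).den : α) ≠ 0) :
    A.det = ((of fun i j => (⟨A i j, hA i j⟩ : denNeZeroSubring α)).det : ℚ) :=
  ((denNeZeroSubring α).subtype.map_det (of fun i j => ⟨A i j, hA i j⟩)).symm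

theorem den_det_ne_zero (hA : ∀ i j, ((A i j).den : α) ≠ 0) : (A.det.den : α) ≠ 0 := by
  rw [det_eq_coe_det_of_den_ne_zero hA]
  exact (det (of fun i j => (⟨A i j, hA i j⟩ : denNeZeroSubring α))).2

theorem cast_det_of_den_ne_zero (hA : ∀ i j, ((A i j).den : α) ≠ 0) :
    ((A.det : ℚ) : α) = (A.map (↑)).det := by
  rw [det_eq_coe_det_of_den_ne_zero hA]
  exact (castHomOfDenNeZero α).map_det _

end Rat

namespace ZMod

variable (p : ℕ) [Fact p.Prime]

noncomputable def finEquivUnits : Fin (p - 1) ≃ (ZMod p)ˣ :=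
  Equiv.ofBijective
    (fun i => Units.mk0 ((i + 1 : ℕ) : ZMod p) fun h => by
      rw [natCast_eq_zero_iff] at h
      exact Nat.not_dvd_of_pos_of_lt (Nat.succ_pos i) (by omega) h) <| by
    rw [Fintype.bijective_iff_injective_and_card, Fintype.card_fin, card_units]
    refine ⟨fun i j hij => ?_, rfl⟩
    have := (natCast_eq_natCast_iff' _ _ p).1 (congrArg Units.val hij)
    rw [Nat.mod_eq_of_lt (by omega), Nat.mod_eq_of_lt (by omega)] at this
    exact Fin.ext (by omega)

theorem finEquivUnits_apply (i : Fin (p - 1)) : (finEquivUnits p i : ZMod p) = (i : ℕ) + 1 := by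
  simp [finEquivUnits]

end ZMod

namespace FiniteField

variable {K : Type*} [Field K] [Fintype K]

theorem isSquare_neg_neg_one_pow_card_sub_one_div_two :
    IsSquare (-(-1 : K) ^ ((Fintype.card K - 1) / 2)) := by
  rcases Nat.even_or_odd ((Fintype.card K - 1) / 2) with h | h
  · rw [h.neg_one_pow, FiniteField.isSquare_neg_one_iff]
    intro h4
    rw [Nat.even_iff] at h
    omega
  · rw [h.neg_one_pow, neg_neg]
    exact IsSquare.one

variable [DecidableEq K]

theorem sum_units_pow_mul_inv_pow {k l : ℕ} (hk : k < Fintype.card K - 1)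
    (hl : l < Fintype.card K - 1) :
    ∑ u : Kˣ, (u : K) ^ k * ((u : K) ^ l)⁻¹ = if k = l then -1 else 0 := by
  have hterm : ∀ u : Kˣ,
      (u : K) ^ k * ((u : K) ^ l)⁻¹ = (u : K) ^ (k + (Fintype.card K - 1 - l)) := by
    intro u
    have hl' : (u : K) ^ (Fintype.card K - 1 - l) * (u : K) ^ l = 1 := by
      rw [← pow_add, Nat.sub_add_cancel hl.le, FiniteField.pow_card_sub_one_eq_one _ u.ne_zero]
    rw [pow_add, ← eq_inv_of_mul_eq_one_left hl']
  rw [sum_congr rfl fun u _ => hterm u, FiniteField.sum_pow_units]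
  refine if_congr ⟨fun hdvd => ?_, fun hkl => ?_⟩ rfl rfl
  · have := Nat.eq_of_dvd_of_lt_two_mul (by omega) hdvd (by omega)
    omega
  · rw [hkl, Nat.add_sub_cancel' hl.le]

theorem sign_neg_units (h2 : (2 : K) ≠ 0) :
    Equiv.Perm.sign (Equiv.neg Kˣ) = (-1) ^ ((Fintype.card K - 1) / 2) := by
  have hfree : IsEmpty (Function.fixedPoints (Equiv.neg Kˣ)) := by
    refine ⟨fun ⟨u, hu⟩ => ?_⟩
    have hu' : -(u : K) = u := congrArg Units.val hu
    exact mul_ne_zero h2 u.ne_zero (by linear_combination -hu')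
  rw [Equiv.Perm.sign_of_pow_two_eq_one (by ext; simp [sq]),
    Fintype.card_eq_zero (α := Function.fixedPoints _), Fintype.card_units, Nat.sub_zero]

end FiniteField

namespace EisensteinDet

section CubeRoot

variable {K : Type*} [Field K] [Fintype K] {m : ℕ}

theorem pow_three_mul_eq_self (hm : 3 * m = 2 * Fintype.card K - 1) (x : K) :
    x ^ (3 * m) = x := by
  have hq := Fintype.card_pos (α := K)
  rw [hm, show 2 * Fintype.card K - 1 = (Fintype.card K - 1) + Fintype.card K by omega,
    pow_add, FiniteField.pow_card, ← pow_succ, Nat.sub_add_cancel hq, FiniteField.pow_card]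

theorem pow_pow_three (hm : 3 * m = 2 * Fintype.card K - 1) (x : K) : (x ^ m) ^ 3 = x := by
  rw [← pow_mul, mul_comm, pow_three_mul_eq_self hm]

theorem pow_three_pow (hm : 3 * m = 2 * Fintype.card K - 1) (x : K) : (x ^ 3) ^ m = x := by
  rw [← pow_mul, pow_three_mul_eq_self hm]

theorem three_mul_natCast (hm : 3 * m = 2 * Fintype.card K - 1) : (3 : K) * m = -1 := by
  have hq := Fintype.card_pos (α := K)
  have h : ((3 * m + 1 : ℕ) : K) = ((2 * Fintype.card K : ℕ) : K) := by congr 1; omega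
  push_cast [FiniteField.cast_card_eq_zero] at h
  linear_combination h

theorem three_ne_zero (hm : 3 * m = 2 * Fintype.card K - 1) : (3 : K) ≠ 0 :=
  left_ne_zero_of_mul (by rw [three_mul_natCast hm]; exact neg_ne_zero.2 one_ne_zero)

theorem sq_sub_mul_add_sq_ne_zero (hm : 3 * m = 2 * Fintype.card K - 1) {x y : K}
    (hy : y ≠ 0) : x ^ 2 - x * y + y ^ 2 ≠ 0 := by
  intro h
  have hcube : x ^ 3 = (-y) ^ 3 := by linear_combination (x + y) * h
  have hxy : x = -y := by rw [← pow_three_pow hm x, hcube, pow_three_pow hm]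
  rw [hxy] at h
  exact mul_ne_zero (three_ne_zero hm) (pow_ne_zero 2 hy) (by linear_combination h)

/-- For `x ≠ y`, writing `x = a³`, `y = b³` with `a = x ^ m`, `b = y ^ m`, the left side is
`(a - b) / (x - y)`, a geometric sum in `x` and `y`. On the diagonal the sum is `m x ^ (m - 1)`,
and `3m = -1` gives the correction. -/
theorem inv_sq_add_mul_add_sq_pow [DecidableEq K] (hm : 3 * m = 2 * Fintype.card K - 1)
    {x : K} (hx : x ≠ 0) (y : K) :
    ((x ^ m) ^ 2 + x ^ m * y ^ m + (y ^ m) ^ 2)⁻¹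
      = ∑ k ∈ range m, x ^ k * y ^ (m - 1 - k) + if x = y then 2 / 3 * x ^ (m - 1) else 0 := by
  have h3 := three_ne_zero hm
  by_cases hxy : x = y
  · subst hxy
    have hq := Fintype.card_pos (α := K)
    have hsum : ∑ k ∈ range m, x ^ k * x ^ (m - 1 - k) = m * x ^ (m - 1) := by
      rw [sum_congr rfl fun k hk => by
        rw [← pow_add, Nat.add_sub_cancel' (Nat.le_sub_one_of_lt (mem_range.1 hk))],
        sum_const, card_range, nsmul_eq_mul]
    have hinv : x ^ (m - 1) * (x ^ m) ^ 2 = 1 := by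
      rw [← pow_mul, ← pow_add, show m - 1 + m * 2 = (Fintype.card K - 1) * 2 by omega,
        pow_mul, FiniteField.pow_card_sub_one_eq_one x hx, one_pow]
    rw [if_pos rfl, hsum, inv_eq_of_mul_eq_one_right]
    field_simp
    linear_combination 3 * x ^ (m - 1) * (x ^ m) ^ 2 * three_mul_natCast hm + 3 * hinv
  · have hx' : x = (x ^ m) ^ 3 := (pow_pow_three hm x).symm
    have hy' : y = (y ^ m) ^ 3 := (pow_pow_three hm y).symm
    have hsub : x - y ≠ 0 := sub_ne_zero.2 hxy
    rw [if_neg hxy, add_zero]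
    refine inv_eq_of_mul_eq_one_right (mul_right_cancel₀ hsub ?_)
    rw [mul_assoc, geom_sum₂_mul, one_mul]
    conv_rhs => rw [hx', hy']
    ring

theorem le_card_sub_one_of_three_mul_eq (hm : 3 * m = 2 * Fintype.card K - 1) :
    m ≤ Fintype.card K - 1 := by
  have := Fintype.one_lt_card (α := K)
  omega

theorem odd_of_three_mul_eq (hm : 3 * m = 2 * Fintype.card K - 1) : Odd m :=
  Nat.odd_iff.2 (by have := Fintype.card_pos (α := K); omega)

end CubeRoot

def eisensteinInvMatrix (K : Type*) [Field K] : Matrix Kˣ Kˣ K :=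
  of fun u v => ((u : K) ^ 2 - u * v + (v : K) ^ 2)⁻¹

section Determinant

variable (K : Type*) [Field K] [Fintype K] (m : ℕ)

def powFormInvMatrix : Matrix Kˣ Kˣ K :=
  of fun u v => (((u : K) ^ m) ^ 2 + (u : K) ^ m * (v : K) ^ m + ((v : K) ^ m) ^ 2)⁻¹

def powMatrix : Matrix Kˣ (Fin m) K := of fun u k => (u : K) ^ (k : ℕ)

def powRevMatrix : Matrix (Fin m) Kˣ K := of fun k v => (v : K) ^ (m - 1 - k)

variable {K m} [DecidableEq K]

theorem powFormInvMatrix_eq_diagonal_add (hm : 3 * m = 2 * Fintype.card K - 1) :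
    powFormInvMatrix K m
      = diagonal (fun u : Kˣ => 2 / 3 * (u : K) ^ (m - 1))
        + powMatrix K m * powRevMatrix K m := by
  ext u v
  rw [powFormInvMatrix, of_apply, inv_sq_add_mul_add_sq_pow hm u.ne_zero, Matrix.add_apply,
    mul_apply, add_comm,
    ← Fin.sum_univ_eq_sum_range (fun k => (u : K) ^ k * (v : K) ^ (m - 1 - k))]
  simp [powMatrix, powRevMatrix, diagonal_apply, Units.val_inj]

theorem det_diagonal_two_div_three_mul_pow (hm : 3 * m = 2 * Fintype.card K - 1)
    (h2 : (2 : K) ≠ 0) : (diagonal fun u : Kˣ => 2 / 3 * (u : K) ^ (m - 1)).det = 1 := by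
  have hmodd := odd_of_three_mul_eq hm
  have hprod : ∏ u : Kˣ, (u : K) = -1 := by
    simpa using congrArg (Units.coeHom K) (FiniteField.prod_univ_units_id_eq_neg_one (K := K))
  rw [det_diagonal, prod_mul_distrib, prod_const, prod_pow, Finset.card_univ, Fintype.card_units,
    FiniteField.pow_card_sub_one_eq_one _ (div_ne_zero h2 (three_ne_zero hm)), hprod,
    (Nat.Odd.sub_odd hmodd odd_one).neg_one_pow, one_mul]

theorem powRevMatrix_mul_inv_diagonal_mul_powMatrix (hm : 3 * m = 2 * Fintype.card K - 1)
    (h2 : (2 : K) ≠ 0) :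
    powRevMatrix K m * (diagonal fun u : Kˣ => 2 / 3 * (u : K) ^ (m - 1))⁻¹ * powMatrix K m
      = (-(3 / 2) : K) • 1 := by
  have hmq := le_card_sub_one_of_three_mul_eq hm
  have hinv : (diagonal fun u : Kˣ => 2 / 3 * (u : K) ^ (m - 1))⁻¹
      = diagonal fun u : Kˣ => (2 / 3 * (u : K) ^ (m - 1))⁻¹ :=
    inv_eq_right_inv <| by
      rw [diagonal_mul_diagonal, ← diagonal_one]
      congr 1
      ext u
      exact mul_inv_cancel₀ (by simp [h2, three_ne_zero hm])
  ext k l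
  have hterm : ∀ u : Kˣ,
      (u : K) ^ (m - 1 - k) * (2 / 3 * (u : K) ^ (m - 1))⁻¹ * (u : K) ^ (l : ℕ)
        = 3 / 2 * ((u : K) ^ (l : ℕ) * ((u : K) ^ (k : ℕ))⁻¹) := by
    intro u
    have hsplit : (u : K) ^ (m - 1) = (u : K) ^ (m - 1 - k) * (u : K) ^ (k : ℕ) := by
      rw [← pow_add, Nat.sub_add_cancel (by omega)]
    rw [hsplit]
    field_simp
  rw [hinv, mul_apply]
  simp only [mul_diagonal, powMatrix, powRevMatrix, of_apply, hterm]
  rw [← mul_sum, FiniteField.sum_units_pow_mul_inv_pow (l.2.trans_le hmq) (k.2.trans_le hmq),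
    Matrix.smul_apply, one_apply]
  simp only [Fin.ext_iff, eq_comm (a := (l : ℕ))]
  split_ifs <;> simp

theorem det_powFormInvMatrix (hm : 3 * m = 2 * Fintype.card K - 1) (h2 : (2 : K) ≠ 0) :
    (powFormInvMatrix K m).det = (-2⁻¹) ^ m := by
  have hhalf : (1 : Matrix (Fin m) (Fin m) K) + (-(3 / 2) : K) • 1 = (-2⁻¹ : K) • 1 := by
    match_scalars
    field_simp
    ring
  rw [powFormInvMatrix_eq_diagonal_add hm,
    det_add_mul _ _ (by simp [det_diagonal_two_div_three_mul_pow hm h2]),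
    det_diagonal_two_div_three_mul_pow hm h2, one_mul,
    powRevMatrix_mul_inv_diagonal_mul_powMatrix hm h2, hhalf, det_smul, det_one, mul_one,
    Fintype.card_fin]

def cubeRootEquiv (hm : 3 * m = 2 * Fintype.card K - 1) : Kˣ ≃ Kˣ where
  toFun u := u ^ m
  invFun u := u ^ 3
  left_inv u := Units.ext (by push_cast; exact pow_pow_three hm u)
  right_inv u := Units.ext (by push_cast; exact pow_three_pow hm u)

theorem det_eisensteinInvMatrix (hm : 3 * m = 2 * Fintype.card K - 1) (h2 : (2 : K) ≠ 0) :
    (eisensteinInvMatrix K).det = (-1) ^ ((Fintype.card K - 1) / 2) * (-2⁻¹) ^ m := by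
  have hmodd := odd_of_three_mul_eq hm
  have hsub : powFormInvMatrix K m = ((eisensteinInvMatrix K).submatrix (cubeRootEquiv hm)
      (cubeRootEquiv hm)).submatrix id (Equiv.neg Kˣ) := by
    ext u v
    simp [powFormInvMatrix, eisensteinInvMatrix, cubeRootEquiv, hmodd.neg_pow]
  have hdet := det_powFormInvMatrix hm h2
  rw [hsub, det_permute', det_submatrix_equiv_self, FiniteField.sign_neg_units h2] at hdet
  rw [← hdet, ← mul_assoc]
  push_cast
  rw [← pow_add, ← two_mul, pow_mul, neg_one_sq, one_pow, one_mul]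

end Determinant

theorem exists_sq_eq_two_mul_det_eisensteinInvMatrix {K : Type*} [Field K] [Fintype K]
    [DecidableEq K] (h2 : (2 : K) ≠ 0) (h3 : Fintype.card K % 3 = 2) :
    ∃ b : K, b ≠ 0 ∧ 2 * (eisensteinInvMatrix K).det = b ^ 2 := by
  set m := (2 * Fintype.card K - 1) / 3
  have hm : 3 * m = 2 * Fintype.card K - 1 := by omega
  have hmodd := odd_of_three_mul_eq hm
  obtain ⟨c, hc⟩ := FiniteField.isSquare_neg_neg_one_pow_card_sub_one_div_two (K := K)
  have hc0 : c ≠ 0 := by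
    rintro rfl
    simp at hc
  refine ⟨c * 2⁻¹ ^ ((m - 1) / 2), mul_ne_zero hc0 (by simp [h2]), ?_⟩
  rw [det_eisensteinInvMatrix hm h2, mul_pow, sq c, ← hc, ← pow_mul, Nat.div_mul_cancel
    (Nat.Odd.sub_odd hmodd odd_one).two_dvd, hmodd.neg_pow, ← pow_sub_one_mul hmodd.pos.ne']
  linear_combination (-(-1) ^ ((Fintype.card K - 1) / 2) * (2⁻¹ : K) ^ (m - 1))
    * mul_inv_cancel₀ h2

def ratEisensteinInvMatrix (n : ℕ) : Matrix (Fin n) (Fin n) ℚ :=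
  of fun i j => (1 : ℚ) / ((((i : ℕ) + 1 : ℕ) ^ 2 - ((i : ℕ) + 1) * ((j : ℕ) + 1)
    + ((j : ℕ) + 1) ^ 2 : ℤ) : ℚ)

variable {p : ℕ} [Fact p.Prime]

theorem ratCast_two_mul_det_ratEisensteinInvMatrix (h3 : p % 3 = 2) :
    ((2 * (ratEisensteinInvMatrix (p - 1)).det : ℚ) : ZMod p)
      = 2 * (eisensteinInvMatrix (ZMod p)).det := by
  obtain ⟨m, hm⟩ : ∃ m, 3 * m = 2 * Fintype.card (ZMod p) - 1 :=
    ⟨(2 * p - 1) / 3, by rw [ZMod.card]; omega⟩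
  set e := ZMod.finEquivUnits p
  set A := ratEisensteinInvMatrix (p - 1)
  have hentry : ∀ i j, ∃ z : ℤ, A i j = (z : ℚ)⁻¹ ∧ (z : ZMod p) ≠ 0 ∧
      (z : ZMod p)⁻¹ = eisensteinInvMatrix (ZMod p) (e i) (e j) := fun i j => by
    let z : ℤ :=
      ((i : ℕ) + 1 : ℕ) ^ 2 - ((i : ℕ) + 1) * ((j : ℕ) + 1) + ((j : ℕ) + 1) ^ 2
    have hz : (z : ZMod p) = (e i : ZMod p) ^ 2 - e i * e j + (e j : ZMod p) ^ 2 := by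
      simp only [z, e, ZMod.finEquivUnits_apply]
      push_cast
      ring
    refine ⟨z, one_div _, ?_, ?_⟩ <;> rw [hz]
    · exact sq_sub_mul_add_sq_ne_zero hm (e j).ne_zero
    · rfl
  have hden : ∀ i j, ((A i j).den : ZMod p) ≠ 0 := fun i j => by
    obtain ⟨z, hA, hz0, -⟩ := hentry i j
    exact hA ▸ Rat.den_inv_intCast_ne_zero hz0
  have hmap : A.map (↑) = (eisensteinInvMatrix (ZMod p)).submatrix e e := by
    ext i j
    obtain ⟨z, hA, hz0, hz⟩ := hentry i j
    rw [map_apply, hA, Rat.cast_inv_intCast_of_ne_zero hz0, hz, submatrix_apply]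
  rw [Rat.cast_mul_of_ne_zero (by simp) (Rat.den_det_ne_zero hden),
    Rat.cast_det_of_den_ne_zero hden, hmap, det_submatrix_equiv_self, Rat.cast_ofNat]

end EisensteinDet

open EisensteinDet in
theorem stmt18 (p : ℕ) [Fact p.Prime] (hodd : Odd p) (h3 : p % 3 = 2) :
    ∃ b : ZMod p, b ≠ 0 ∧
      ((2 * Matrix.det (Matrix.of fun i j : Fin (p - 1) =>
          (1 : ℚ) / ((((i : ℕ) + 1 : ℕ) ^ 2 - ((i : ℕ) + 1) * ((j : ℕ) + 1)
            + ((j : ℕ) + 1) ^ 2 : ℤ) : ℚ)) : ℚ) : ZMod p) = b ^ 2 := by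
  have h2 : (2 : ZMod p) ≠ 0 := Ring.two_ne_zero <| by
    rw [ZMod.ringChar_zmod_n]
    rintro rfl
    exact Nat.not_even_iff_odd.2 hodd even_two
  obtain ⟨b, hb, hsq⟩ := exists_sq_eq_two_mul_det_eisensteinInvMatrix h2 (by rwa [ZMod.card])
  exact ⟨b, hb, hsq ▸ ratCast_two_mul_det_ratEisensteinInvMatrix h3⟩
end
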